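/- arXiv:1608.01164 — 11 statements merged into one kernel-verified Lean document; each statement's English description precedes it below -/
import Mathlib

section
/- Let g ∈ (0,1] and set μ = ((1−√g)/(1+√g))². Then √(1−μ²) = √(8·√g·(1+g)) / (1+√g)², and consequently √(1−μ²) ≥ g^(1/4). -/
/-- For `g ∈ (0,1]` and `μ = ((1-√g)/(1+√g))²`, one has
`√(1-μ²) = √(8·√g·(1+g)) / (1+√g)²`, and consequently `√(1-μ²) ≥ g^(1/4)`. -/
theorem complementary_modulus_bound (g μ : ℝ) (hg : g ∈ Set.Ioc (0 : ℝ) 1)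
    (hμ : μ = ((1 - Real.sqrt g) / (1 + Real.sqrt g)) ^ 2) :
    Real.sqrt (1 - μ ^ 2) =
      Real.sqrt (8 * Real.sqrt g * (1 + g)) / (1 + Real.sqrt g) ^ 2 ∧
    g ^ ((1 : ℝ) / 4) ≤ Real.sqrt (1 - μ ^ 2) := by
  obtain ⟨hg0, hg1⟩ := hg
  set s := Real.sqrt g with hs
  have hs0 : 0 < s := Real.sqrt_pos.mpr hg0
  have hs1 : s ≤ 1 := by
    rw [hs, show (1:ℝ) = Real.sqrt 1 by simp]
    exact Real.sqrt_le_sqrt hg1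
  have hsq : s ^ 2 = g := Real.sq_sqrt hg0.le
  have h1s : (0:ℝ) < 1 + s := by linarith
  have hkey : 1 - μ ^ 2 = 8 * s * (1 + g) / (1 + s) ^ 4 := by
    rw [hμ]
    field_simp
    rw [← hsq]; ring
  have hsqrt4 : Real.sqrt ((1 + s) ^ 4) = (1 + s) ^ 2 := by
    rw [show (1 + s) ^ 4 = ((1 + s) ^ 2) ^ 2 by ring]
    exact Real.sqrt_sq (by positivity)
  have heq : Real.sqrt (1 - μ ^ 2) =
      Real.sqrt (8 * s * (1 + g)) / (1 + s) ^ 2 := by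
    rw [hkey, Real.sqrt_div (by positivity), hsqrt4]
  refine ⟨heq, ?_⟩
  have hrpow : g ^ ((1 : ℝ) / 4) = Real.sqrt s := by
    rw [hs, Real.sqrt_eq_rpow, Real.sqrt_eq_rpow, ← Real.rpow_mul hg0.le]
    norm_num
  rw [heq, hrpow, le_div_iff₀ (by positivity), ← hsqrt4,
    ← Real.sqrt_mul hs0.le]
  apply Real.sqrt_le_sqrt
  nlinarith [hsq, mul_nonneg (mul_nonneg hs0.le (sub_nonneg.mpr hs1))
    (by positivity : (0:ℝ) ≤ 7 + 3 * s + 5 * s ^ 2 + s ^ 3)]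
end

section
/- Let 𝔽 be a field, let B ∈ 𝔽^{n×n} be invertible, and let 1 ≤ k < n. Then the rank of the off-diagonal block B⁻¹(1:k, k+1:n) equals the rank of the off-diagonal block B(1:k, k+1:n). In particular, if B is b-banded, then every off-diagonal block of B⁻¹ has rank at most b. -/
open Matrix

/-- The upper off-diagonal block `M(1:k, k+1:n)` of a square matrix. -/
def offUpper {α : Type*} {n : ℕ} (M : Matrix (Fin n) (Fin n) α) (k : ℕ) (hk : k < n) :
    Matrix (Fin k) (Fin (n - k)) α :=
  M.submatrix (fun i => ⟨i.1, i.2.trans hk⟩) (fun j => ⟨k + j.1, by omega⟩)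

/-- The lower off-diagonal block `M(k+1:n, 1:k)` of a square matrix. -/
def offLower {α : Type*} {n : ℕ} (M : Matrix (Fin n) (Fin n) α) (k : ℕ) (hk : k < n) :
    Matrix (Fin (n - k)) (Fin k) α :=
  M.submatrix (fun i => ⟨k + i.1, by omega⟩) (fun j => ⟨j.1, j.2.trans hk⟩)

section Aux

variable {F : Type*} [Field F] {n k : ℕ}

/-- Extension by zero: put `v` in the last `n - k` coordinates. -/
noncomputable def extL (F : Type*) [Field F] (k n : ℕ) (hkn : k < n) :
    (Fin (n - k) → F) →ₗ[F] (Fin n → F) where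
  toFun v := fun l => if h : k ≤ l.1 then v ⟨l.1 - k, by omega⟩ else 0
  map_add' x y := by funext l; by_cases h : k ≤ l.1 <;> simp [h]
  map_smul' c x := by funext l; by_cases h : k ≤ l.1 <;> simp [h]

/-- Projection onto the last `n - k` coordinates. -/
noncomputable def qL (F : Type*) [Field F] (k n : ℕ) (hkn : k < n) :
    (Fin n → F) →ₗ[F] (Fin (n - k) → F) where
  toFun w := fun j => w ⟨k + j.1, by omega⟩
  map_add' x y := rfl
  map_smul' c x := rfl

lemma extL_apply_lt (hkn : k < n) (v : Fin (n - k) → F) (l : Fin n) (hl : l.1 < k) :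
    extL F k n hkn v l = 0 := by
  simp only [extL, LinearMap.coe_mk, AddHom.coe_mk]
  rw [dif_neg (by omega)]

lemma extL_apply_add (hkn : k < n) (v : Fin (n - k) → F) (j : Fin (n - k)) (h : k + j.1 < n) :
    extL F k n hkn v ⟨k + j.1, h⟩ = v j := by
  simp only [extL, LinearMap.coe_mk, AddHom.coe_mk]
  rw [dif_pos (Nat.le_add_right k j.1)]
  congr 1
  exact Fin.ext (show k + j.1 - k = j.1 by omega)

lemma qL_extL (hkn : k < n) (v : Fin (n - k) → F) : qL F k n hkn (extL F k n hkn v) = v := by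
  funext j
  exact extL_apply_add hkn v j (by omega)

lemma extL_qL (hkn : k < n) (w : Fin n → F) (hw : ∀ l : Fin n, l.1 < k → w l = 0) :
    extL F k n hkn (qL F k n hkn w) = w := by
  funext l
  simp only [qL, extL, LinearMap.coe_mk, AddHom.coe_mk]
  by_cases h : k ≤ l.1
  · rw [dif_pos h]
    congr 1
    exact Fin.ext (show k + (l.1 - k) = l.1 by omega)
  · rw [dif_neg h, eq_comm]
    exact hw l (by omega)

lemma sum_split (hkn : k < n) {M : Type*} [AddCommMonoid M] (g : Fin n → M) :
    ∑ l, g l = (∑ i : Fin k, g ⟨i.1, i.2.trans hkn⟩) +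
      ∑ j : Fin (n - k), g ⟨k + j.1, by omega⟩ := by
  rw [← Equiv.sum_comp (finSumFinEquiv.trans (finCongr (by omega : k + (n - k) = n))) g,
    Fintype.sum_sum_type]
  congr 1
  all_goals
    exact Finset.sum_congr rfl fun a _ => congrArg g (Fin.ext (by simp [finSumFinEquiv]))

/-- The upper block acting on a vector is the truncation of `M` acting on the extension. -/
lemma offUpper_mulVec (M : Matrix (Fin n) (Fin n) F) (hkn : k < n) (v : Fin (n - k) → F)
    (i : Fin k) :
    (offUpper M k hkn).mulVec v i = M.mulVec (extL F k n hkn v) ⟨i.1, i.2.trans hkn⟩ := by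
  classical
  simp only [Matrix.mulVec, dotProduct, offUpper, Matrix.submatrix_apply]
  rw [sum_split hkn (fun l : Fin n => M ⟨i.1, i.2.trans hkn⟩ l * extL F k n hkn v l)]
  have h1 : (∑ a : Fin k, M ⟨i.1, i.2.trans hkn⟩ ⟨a.1, a.2.trans hkn⟩ *
      extL F k n hkn v ⟨a.1, a.2.trans hkn⟩) = 0 := by
    apply Finset.sum_eq_zero
    intro a _
    rw [extL_apply_lt hkn v _ a.2]
    ring
  rw [h1, zero_add]
  apply Finset.sum_congr rfl
  intro j _
  rw [extL_apply_add hkn v j]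

lemma ker_mem_iff (M : Matrix (Fin n) (Fin n) F) (hkn : k < n) (v : Fin (n - k) → F) :
    v ∈ LinearMap.ker (offUpper M k hkn).mulVecLin ↔
      ∀ l : Fin n, l.1 < k → M.mulVec (extL F k n hkn v) l = 0 := by
  constructor
  · intro hv l hl
    have := congrFun (LinearMap.mem_ker.mp hv) ⟨l.1, hl⟩
    rw [Matrix.mulVecLin_apply, offUpper_mulVec M hkn v] at this
    simpa using this
  · intro h
    rw [LinearMap.mem_ker]
    funext i
    rw [Matrix.mulVecLin_apply, offUpper_mulVec M hkn v]
    exact h _ i.2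

/-- Key rank identity: the upper off-diagonal block of the inverse has the same rank. -/
lemma rank_offUpper_inv (B : Matrix (Fin n) (Fin n) F) (hB : IsUnit B.det) (hkn : k < n) :
    (offUpper B⁻¹ k hkn).rank = (offUpper B k hkn).rank := by
  classical
  have hBB : B⁻¹ * B = 1 := Matrix.nonsing_inv_mul B hB
  have hBB' : B * B⁻¹ = 1 := Matrix.mul_nonsing_inv B hB
  set e := extL F k n hkn with he
  set q := qL F k n hkn with hq
  set φ : (Fin (n - k) → F) →ₗ[F] (Fin (n - k) → F) := q ∘ₗ B.mulVecLin ∘ₗ e with hφ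
  set ψ : (Fin (n - k) → F) →ₗ[F] (Fin (n - k) → F) := q ∘ₗ B⁻¹.mulVecLin ∘ₗ e with hψ
  have key1 : ∀ v ∈ LinearMap.ker (offUpper B k hkn).mulVecLin,
      e (φ v) = B.mulVec (e v) := by
    intro v hv
    rw [hφ]
    simp only [LinearMap.comp_apply, Matrix.mulVecLin_apply]
    exact extL_qL hkn _ ((ker_mem_iff B hkn v).mp hv)
  have key2 : ∀ u ∈ LinearMap.ker (offUpper B⁻¹ k hkn).mulVecLin,
      e (ψ u) = B⁻¹.mulVec (e u) := by
    intro u hu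
    rw [hψ]
    simp only [LinearMap.comp_apply, Matrix.mulVecLin_apply]
    exact extL_qL hkn _ ((ker_mem_iff B⁻¹ hkn u).mp hu)
  have hmap1 : ∀ v ∈ LinearMap.ker (offUpper B k hkn).mulVecLin,
      φ v ∈ LinearMap.ker (offUpper B⁻¹ k hkn).mulVecLin := by
    intro v hv
    rw [ker_mem_iff]
    intro l hl
    rw [key1 v hv, Matrix.mulVec_mulVec, hBB, Matrix.one_mulVec]
    exact extL_apply_lt hkn v l hl
  have hmap2 : ∀ u ∈ LinearMap.ker (offUpper B⁻¹ k hkn).mulVecLin,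
      ψ u ∈ LinearMap.ker (offUpper B k hkn).mulVecLin := by
    intro u hu
    rw [ker_mem_iff]
    intro l hl
    rw [key2 u hu, Matrix.mulVec_mulVec, hBB', Matrix.one_mulVec]
    exact extL_apply_lt hkn u l hl
  have hfr : Module.finrank F (LinearMap.ker (offUpper B k hkn).mulVecLin) =
      Module.finrank F (LinearMap.ker (offUpper B⁻¹ k hkn).mulVecLin) := by
    refine LinearEquiv.finrank_eq (LinearEquiv.ofLinear
      (φ.restrict hmap1) (ψ.restrict hmap2) ?_ ?_)
    · apply LinearMap.ext
      intro u
      apply Subtype.ext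
      have h1 : e (((φ.restrict hmap1) ((ψ.restrict hmap2) u)) : Fin (n - k) → F) = e u.1 := by
        rw [LinearMap.restrict_apply, key1 _ ((ψ.restrict hmap2) u).2,
          LinearMap.restrict_apply, key2 u.1 u.2, Matrix.mulVec_mulVec, hBB',
          Matrix.one_mulVec]
      have h2 := congrArg q h1
      rw [he, hq] at h2
      rw [qL_extL, qL_extL] at h2
      simpa only [LinearMap.comp_apply, LinearMap.id_apply] using h2
    · apply LinearMap.ext
      intro v
      apply Subtype.ext
      have h1 : e (((ψ.restrict hmap2) ((φ.restrict hmap1) v)) : Fin (n - k) → F) = e v.1 := by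
        rw [LinearMap.restrict_apply, key2 _ ((φ.restrict hmap1) v).2,
          LinearMap.restrict_apply, key1 v.1 v.2, Matrix.mulVec_mulVec, hBB,
          Matrix.one_mulVec]
      have h2 := congrArg q h1
      rw [he, hq] at h2
      rw [qL_extL, qL_extL] at h2
      simpa only [LinearMap.comp_apply, LinearMap.id_apply] using h2
  have h1 := LinearMap.finrank_range_add_finrank_ker (offUpper B k hkn).mulVecLin
  have h2 := LinearMap.finrank_range_add_finrank_ker (offUpper B⁻¹ k hkn).mulVecLin
  unfold Matrix.rank
  omega

/-- If all rows outside the range of an injection from `Fin r` vanish, the rank is at most `r`. -/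
lemma rank_le_of_rows {m p r : ℕ} (M : Matrix (Fin m) (Fin p) F) (f : Fin r → Fin m)
    (hf : Function.Injective f) (h : ∀ i : Fin m, (∀ t, f t ≠ i) → ∀ j, M i j = 0) :
    M.rank ≤ r := by
  classical
  have hM : M = (Matrix.of fun i t => if f t = i then (1 : F) else 0) * M.submatrix f id := by
    ext i j
    rw [Matrix.mul_apply]
    by_cases hi : ∃ t, f t = i
    · obtain ⟨t0, ht0⟩ := hi
      have hz : ∀ t ∈ Finset.univ, t ≠ t0 →
          (Matrix.of fun i t => if f t = i then (1 : F) else 0) i t *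
            M.submatrix f id t j = 0 := by
        intro t _ ht
        have hne : f t ≠ i := fun hc => ht (hf (hc.trans ht0.symm))
        simp [hne]
      rw [Finset.sum_eq_single t0 hz (by simp)]
      simp [ht0]
    · push_neg at hi
      rw [h i hi j]
      symm
      apply Finset.sum_eq_zero
      intro t _
      simp [hi t]
  conv_lhs => rw [hM]
  refine le_trans (Matrix.rank_mul_le_right _ _) ?_
  refine le_trans (Matrix.rank_le_card_height _) ?_
  simp

lemma offLower_eq_transpose (M : Matrix (Fin n) (Fin n) F) (hkn : k < n) :
    offLower M k hkn = (offUpper Mᵀ k hkn)ᵀ := rfl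

end Aux

/-- For an invertible matrix `B` over a field and `1 ≤ k < n`, the rank of
the off-diagonal block `B⁻¹(1:k, k+1:n)` equals the rank of `B(1:k, k+1:n)`. In particular,
if `B` is `b`-banded, then every off-diagonal block of `B⁻¹` has rank at most `b`. -/
theorem rank_offdiag_inv {F : Type*} [Field F] {n b k : ℕ}
    (B : Matrix (Fin n) (Fin n) F) (hB : IsUnit B.det)
    (hk1 : 1 ≤ k) (hkn : k < n) :
    (offUpper B⁻¹ k hkn).rank = (offUpper B k hkn).rank ∧
    ((∀ i j : Fin n, (b : ℤ) < |(i : ℤ) - (j : ℤ)| → B i j = 0) →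
      (offUpper B⁻¹ k hkn).rank ≤ b ∧ (offLower B⁻¹ k hkn).rank ≤ b) := by
  have hmain := rank_offUpper_inv B hB hkn
  refine ⟨hmain, fun hband => ?_⟩
  constructor
  · -- upper block
    rw [hmain]
    by_cases hbk : k ≤ b
    · refine le_trans (Matrix.rank_le_card_height _) ?_
      simpa using hbk
    · push_neg at hbk
      apply rank_le_of_rows (offUpper B k hkn) (fun t : Fin b => ⟨k - b + t.1, by omega⟩)
      · intro s t hst
        rw [Fin.mk_eq_mk] at hst
        exact Fin.ext (show s.1 = t.1 by omega)
      · intro i hi j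
        have hik : i.1 < k - b := by
          by_contra hc
          exact hi ⟨i.1 - (k - b), by omega⟩
            (Fin.ext (show k - b + (i.1 - (k - b)) = i.1 by omega))
        apply hband
        have h1 : ((⟨i.1, i.2.trans hkn⟩ : Fin n) : ℤ) = (i.1 : ℤ) := rfl
        have h2 : ((⟨k + j.1, by omega⟩ : Fin n) : ℤ) = ((k : ℤ) + (j.1 : ℤ)) := by push_cast; rfl
        rw [h1, h2, abs_sub_comm, abs_of_nonneg (by push_cast; omega)]
        push_cast
        omega
  · -- lower block
    have htr : (offLower B⁻¹ k hkn).rank = (offLower B k hkn).rank := by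
      rw [offLower_eq_transpose B⁻¹ hkn, offLower_eq_transpose B hkn,
        Matrix.rank_transpose, Matrix.rank_transpose, Matrix.transpose_nonsing_inv]
      exact rank_offUpper_inv Bᵀ (by rwa [Matrix.det_transpose]) hkn
    rw [htr]
    by_cases hbk : n - k ≤ b
    · refine le_trans (Matrix.rank_le_card_height _) ?_
      simpa using hbk
    · push_neg at hbk
      apply rank_le_of_rows (offLower B k hkn) (fun t : Fin b => ⟨t.1, by omega⟩)
      · intro s t hst
        rw [Fin.mk_eq_mk] at hst
        exact Fin.ext hst
      · intro i hi j
        have hik : b ≤ i.1 := by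
          by_contra hc
          exact hi ⟨i.1, by omega⟩ (Fin.ext rfl)
        apply hband
        have hjk : j.1 < k := j.2
        have h1 : ((⟨k + i.1, by omega⟩ : Fin n) : ℤ) = ((k : ℤ) + (i.1 : ℤ)) := by push_cast; rfl
        have h2 : ((⟨j.1, j.2.trans hkn⟩ : Fin n) : ℤ) = (j.1 : ℤ) := rfl
        rw [h1, h2, abs_of_nonneg (by push_cast; omega)]
        push_cast
        omega
end

section
/- Let P ∈ ℝ^{n×n} satisfy the entrywise decay bound |P_{ij}| ≤ C·e^{−α|i−j|} for all i,j, where C > 0 and α > 0. For an integer m ≥ 0, let P^{(m)} be the matrix of bandwidth m obtained from P by setting to zero all entries P_{ij} with |i−j| > m. Then ‖P − P^{(m)}‖_F ≤ (C/√α)·√n·e^{−αm}. -/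
/-!
Squaring the decay bound, every entry discarded by the truncation in row `i` is at most
`C² e^{-2α|i-j|}`, and each distance `k > m` occurs at most twice in a row. Hence a row contributes
at most `2 C² ∑_{k > m} e^{-2αk} ≤ C² e^{-2αm} / α`, the geometric tail being controlled through
`e^{2α} - 1 ≥ 2α`. Summing the `n` rows and taking the square root gives the bound.
-/

open Finset Real

lemma sum_Ico_exp_neg_mul_le {β : ℝ} (hβ : 0 < β) (m N : ℕ) :
    ∑ k ∈ Ico (m + 1) N, exp (-β * k) ≤ exp (-β * m) / β := by
  have hpow (k : ℕ) : exp (-β * k) = exp (-β) ^ k := by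
    rw [← exp_nat_mul]; ring_nf
  have hr : exp (-β) < 1 := exp_lt_one_iff.mpr (by linarith)
  have htail : exp (-β) / (1 - exp (-β)) ≤ 1 / β := by
    have hexp : exp β * exp (-β) = 1 := by rw [← exp_add]; simp
    have hlin : β + 1 ≤ exp β := add_one_le_exp β
    rw [div_le_div_iff₀ (by linarith) hβ]
    nlinarith [exp_pos (-β)]
  simp only [hpow]
  calc ∑ k ∈ Ico (m + 1) N, exp (-β) ^ k
      ≤ exp (-β) ^ (m + 1) / (1 - exp (-β)) :=
        geom_sum_Ico_le_of_lt_one (exp_pos _).le hr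
    _ = exp (-β) ^ m * (exp (-β) / (1 - exp (-β))) := by ring
    _ ≤ exp (-β) ^ m * (1 / β) := by gcongr
    _ = exp (-β) ^ m / β := by ring

lemma card_filter_natAbs_sub_eq_le_two {n : ℕ} (i : Fin n) (k : ℕ) :
    #{j : Fin n | ((i : ℤ) - j).natAbs = k} ≤ 2 := by
  calc #{j : Fin n | ((i : ℤ) - j).natAbs = k}
      ≤ #({(i : ℤ) - k, (i : ℤ) + k} : Finset ℤ) := by
        refine card_le_card_of_injOn (fun j : Fin n => (j : ℤ)) ?_ ?_
        · intro j hj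
          simp only [coe_filter, mem_univ, true_and, Set.mem_ofPred_eq] at hj
          simp only [coe_insert, coe_singleton, Set.mem_insert_iff, Set.mem_singleton_iff]
          omega
        · intro a _ b _ hab
          exact Fin.ext (by simpa using hab)
    _ ≤ 2 := card_le_two

lemma sum_comp_natAbs_sub_le {n : ℕ} (f : ℕ → ℝ) (hf : ∀ k, 0 ≤ f k) (i : Fin n) :
    ∑ j : Fin n, f ((i : ℤ) - j).natAbs ≤ 2 * ∑ k ∈ range n, f k := by
  have himage : univ.image (fun j : Fin n => ((i : ℤ) - j).natAbs) ⊆ range n := by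
    intro k hk
    obtain ⟨j, -, rfl⟩ := mem_image.mp hk
    simp only [mem_range]
    omega
  rw [sum_comp, mul_sum]
  calc ∑ k ∈ univ.image (fun j : Fin n => ((i : ℤ) - j).natAbs),
        #{j : Fin n | ((i : ℤ) - j).natAbs = k} • f k
      ≤ ∑ k ∈ univ.image (fun j : Fin n => ((i : ℤ) - j).natAbs), 2 * f k := by
        gcongr with k
        rw [nsmul_eq_mul]
        gcongr
        · exact hf k
        · exact_mod_cast card_filter_natAbs_sub_eq_le_two i k
    _ ≤ ∑ k ∈ range n, 2 * f k :=
        sum_le_sum_of_subset_of_nonneg himage fun k _ _ => by linarith [hf k]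

lemma sum_sq_offBand_le {n : ℕ} (P : Matrix (Fin n) (Fin n) ℝ) (C α : ℝ) (hα : 0 < α)
    (hdecay : ∀ i j : Fin n, |P i j| ≤ C * exp (-α * |(i : ℤ) - (j : ℤ)|)) (m : ℕ) (i : Fin n) :
    ∑ j : Fin n, (if |(i : ℤ) - (j : ℤ)| ≤ (m : ℤ) then 0 else P i j) ^ 2 ≤ C ^ 2 * exp (-2 * α * m) / α := by
  set g : ℕ → ℝ := fun k => if m < k then exp (-(2 * α) * k) else 0
  have hentry (j : Fin n) :
      (if |(i : ℤ) - (j : ℤ)| ≤ (m : ℤ) then 0 else P i j) ^ 2 ≤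
        C ^ 2 * g ((i : ℤ) - j).natAbs := by
    set d := ((i : ℤ) - j).natAbs
    have habs : |(i : ℤ) - (j : ℤ)| = d := Int.abs_eq_natAbs _
    have hdecay' : |P i j| ≤ C * exp (-α * d) := by simpa [habs] using hdecay i j
    simp only [g, habs, Nat.cast_le]
    split_ifs with hle hlt hlt
    · omega
    · simp
    · calc P i j ^ 2 = |P i j| ^ 2 := (sq_abs _).symm
        _ ≤ (C * exp (-α * d)) ^ 2 := by gcongr
        _ = C ^ 2 * exp (-(2 * α) * d) := by
            rw [mul_pow, ← exp_nat_mul]; ring_nf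
    · omega
  have hg : ∑ k ∈ range n, g k = ∑ k ∈ Ico (m + 1) n, exp (-(2 * α) * k) := by
    rw [← sum_filter]
    congr 1
    ext k
    simp only [mem_filter, mem_range, mem_Ico]
    omega
  calc ∑ j : Fin n, (if |(i : ℤ) - (j : ℤ)| ≤ (m : ℤ) then 0 else P i j) ^ 2
      ≤ C ^ 2 * ∑ j : Fin n, g ((i : ℤ) - j).natAbs := by
        rw [mul_sum]; exact sum_le_sum fun j _ => hentry j
    _ ≤ C ^ 2 * (2 * ∑ k ∈ range n, g k) := by
        gcongr
        exact sum_comp_natAbs_sub_le g (fun k => by positivity) i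
    _ ≤ C ^ 2 * (2 * (exp (-(2 * α) * m) / (2 * α))) := by
        rw [hg]
        gcongr
        exact sum_Ico_exp_neg_mul_le (by linarith) m n
    _ = C ^ 2 * exp (-2 * α * m) / α := by
        field_simp

/-- If `|P i j| ≤ C e^{-α|i-j|}` for all `i, j`, and `P⁽ᵐ⁾` is obtained from
`P` by zeroing all entries with `|i-j| > m`, then `‖P - P⁽ᵐ⁾‖_F ≤ (C/√α)·√n·e^{-αm}`. -/
theorem frobenius_banded_truncation {n : ℕ} (P : Matrix (Fin n) (Fin n) ℝ)
    (C α : ℝ) (hC : 0 < C) (hα : 0 < α)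
    (hdecay : ∀ i j : Fin n, |P i j| ≤ C * Real.exp (-α * |(i : ℤ) - (j : ℤ)|))
    (m : ℕ) (Pm : Matrix (Fin n) (Fin n) ℝ)
    (hPm : Pm = Matrix.of fun i j : Fin n =>
      if |(i : ℤ) - (j : ℤ)| ≤ (m : ℤ) then P i j else 0) :
    Real.sqrt (∑ i, ∑ j, (P i j - Pm i j) ^ 2) ≤
      C / Real.sqrt α * Real.sqrt n * Real.exp (-α * m) := by
  have hdiff (i j : Fin n) :
      P i j - Pm i j = if |(i : ℤ) - (j : ℤ)| ≤ (m : ℤ) then 0 else P i j := by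
    subst hPm; split_ifs <;> simp [*]
  have hrows : ∑ i, ∑ j, (P i j - Pm i j) ^ 2 ≤ n * (C ^ 2 * exp (-2 * α * m) / α) := by
    simp only [hdiff]
    simpa using sum_le_sum fun i (_ : i ∈ univ) => sum_sq_offBand_le P C α hα hdecay m i
  rw [sqrt_le_left (by positivity)]
  calc ∑ i, ∑ j, (P i j - Pm i j) ^ 2 ≤ n * (C ^ 2 * exp (-2 * α * m) / α) := hrows
    _ = (C / √α * √n * exp (-α * m)) ^ 2 := by
      rw [mul_pow, mul_pow, div_pow, sq_sqrt hα.le, sq_sqrt n.cast_nonneg, ← exp_nat_mul]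
      push_cast; ring_nf
end

section
/- Let B ∈ ℝ^{n×n}, and suppose Q ∈ ℝ^{2n×n} has orthonormal columns (QᵀQ = I_n) and R ∈ ℝ^{n×n} is invertible, with the stacked matrix [B; I_n] equal to QR. Write Q = [Q₁; Q₂] with Q₁, Q₂ ∈ ℝ^{n×n}, so that Q₁R = B and Q₂R = I. Then: (i) RᵀR = I + BᵀB; (ii) Q₂ = R⁻¹ and Q₁ = B·R⁻¹ (in particular, if R is upper triangular then Q₂ is upper triangular); and (iii) Q₁Q₂ᵀ = B·(I + BᵀB)⁻¹. -/
open Matrix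

/-- If `[B; I] = Q R` with `Q = [Q₁; Q₂]` having orthonormal columns and `R`
invertible, then `RᵀR = I + BᵀB`, `Q₂ = R⁻¹`, `Q₁ = B R⁻¹` (in particular `Q₂` is upper
triangular whenever `R` is), and `Q₁ Q₂ᵀ = B (I + BᵀB)⁻¹`. -/
theorem stacked_qr_structure {n : ℕ} (B Q₁ Q₂ R : Matrix (Fin n) (Fin n) ℝ)
    (hinv : IsUnit R.det)
    (horth : (Matrix.fromRows Q₁ Q₂)ᵀ * Matrix.fromRows Q₁ Q₂ = 1)
    (hQR : Matrix.fromRows B (1 : Matrix (Fin n) (Fin n) ℝ) =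
      Matrix.fromRows Q₁ Q₂ * R) :
    Rᵀ * R = 1 + Bᵀ * B ∧
    Q₂ = R⁻¹ ∧ Q₁ = B * R⁻¹ ∧
    (R.BlockTriangular id → Q₂.BlockTriangular id) ∧
    Q₁ * Q₂ᵀ = B * (1 + Bᵀ * B)⁻¹ := by
  rw [fromRows_mul] at hQR
  have hB : B = Q₁ * R := congrArg (fun M => Matrix.toRows₁ M) hQR
  have hI : (1 : Matrix (Fin n) (Fin n) ℝ) = Q₂ * R :=
    congrArg (fun M => Matrix.toRows₂ M) hQR
  have hsum : Q₁ᵀ * Q₁ + Q₂ᵀ * Q₂ = 1 := by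
    rwa [transpose_fromRows, fromCols_mul_fromRows] at horth
  have hQ₂ : Q₂ = R⁻¹ := by
    rw [Matrix.inv_eq_left_inv hI.symm]
  have hQ₁ : Q₁ = B * R⁻¹ := by
    rw [hB, Matrix.mul_assoc, Matrix.mul_nonsing_inv _ hinv, Matrix.mul_one]
  have hRR : Rᵀ * R = 1 + Bᵀ * B := by
    calc Rᵀ * R = Rᵀ * (Q₁ᵀ * Q₁ + Q₂ᵀ * Q₂) * R := by rw [hsum, Matrix.mul_one]
    _ = (Q₁ * R)ᵀ * (Q₁ * R) + (Q₂ * R)ᵀ * (Q₂ * R) := by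
        simp [Matrix.transpose_mul, Matrix.mul_add, Matrix.add_mul, Matrix.mul_assoc]
    _ = 1 + Bᵀ * B := by rw [← hB, ← hI]; simp [add_comm]
  refine ⟨hRR, hQ₂, hQ₁, ?_, ?_⟩
  · intro hR
    rw [hQ₂]
    have := R.invertibleOfIsUnitDet hinv
    exact Matrix.blockTriangular_inv_of_blockTriangular hR
  · have h1 : IsUnit (1 + Bᵀ * B).det := by
      rw [← hRR, Matrix.det_mul, Matrix.det_transpose]
      exact hinv.mul hinv
    rw [hQ₁, hQ₂, ← hRR, Matrix.transpose_nonsing_inv, Matrix.mul_assoc,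
      ← Matrix.mul_inv_rev]
end

section
/- Let X ∈ ℝ^{n×n} and let a, b, c ∈ ℝ with c > 0. Then X·(aI + b·XᵀX)·(I + c·XᵀX)⁻¹ = (b/c)·X + (a − b/c)·X·(I + c·XᵀX)⁻¹. In particular, if W is any invertible matrix with WᵀW = I + c·XᵀX (e.g., the Cholesky factor), then X·(aI + b·XᵀX)·(I + c·XᵀX)⁻¹ = (b/c)·X + (a − b/c)·(X·W⁻¹)·W⁻ᵀ. -/
open Matrix
open scoped ComplexOrder

theorem Matrix.posDef_one_add_smul_conjTranspose_mul_self {𝕜 m n : Type*} [RCLike 𝕜]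
    [Fintype m] [Fintype n] [DecidableEq n] (X : Matrix m n 𝕜) {c : ℝ} (hc : 0 ≤ c) :
    (1 + c • (Xᴴ * X)).PosDef :=
  PosDef.one.add_posSemidef ((posSemidef_conjTranspose_mul_self X).smul hc)

theorem Matrix.mul_smul_one_add_smul_mul_inv {K m n : Type*} [Field K] [Fintype n] [DecidableEq n]
    (X : Matrix m n K) (Y : Matrix n n K) (a b : K) {c : K} (hc : c ≠ 0)
    (hY : IsUnit (1 + c • Y).det) :
    X * (a • 1 + b • Y) * (1 + c • Y)⁻¹ = (b / c) • X + (a - b / c) • (X * (1 + c • Y)⁻¹) := by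
  have hsplit : a • (1 : Matrix n n K) + b • Y = (b / c) • (1 + c • Y) + (a - b / c) • 1 := by
    rw [smul_add, smul_smul, div_mul_cancel₀ _ hc]
    module
  rw [hsplit, Matrix.mul_add, Matrix.add_mul, Matrix.mul_smul, Matrix.smul_mul, Matrix.mul_assoc,
    mul_nonsing_inv _ hY, Matrix.mul_smul, Matrix.smul_mul, Matrix.mul_one]

/-- For `X ∈ ℝ^{n×n}` and `c > 0`,
`X (aI + b XᵀX)(I + c XᵀX)⁻¹ = (b/c) X + (a - b/c) X (I + c XᵀX)⁻¹`, and for any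
invertible `W` with `WᵀW = I + c XᵀX` this also equals
`(b/c) X + (a - b/c) (X W⁻¹) W⁻ᵀ`. -/
theorem qdwh_cholesky_identity {n : ℕ} (X : Matrix (Fin n) (Fin n) ℝ)
    (a b c : ℝ) (hc : 0 < c) :
    X * (a • (1 : Matrix (Fin n) (Fin n) ℝ) + b • (Xᵀ * X)) *
        (1 + c • (Xᵀ * X))⁻¹ =
      (b / c) • X + (a - b / c) • (X * (1 + c • (Xᵀ * X))⁻¹) ∧
    ∀ W : Matrix (Fin n) (Fin n) ℝ, IsUnit W.det → Wᵀ * W = 1 + c • (Xᵀ * X) →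
      X * (a • (1 : Matrix (Fin n) (Fin n) ℝ) + b • (Xᵀ * X)) *
          (1 + c • (Xᵀ * X))⁻¹ =
        (b / c) • X + (a - b / c) • ((X * W⁻¹) * (W⁻¹)ᵀ) := by
  have hunit : IsUnit (1 + c • (Xᵀ * X)).det := by
    rw [← isUnit_iff_isUnit_det, ← conjTranspose_eq_transpose_of_trivial]
    exact (posDef_one_add_smul_conjTranspose_mul_self X hc.le).isUnit
  have key := mul_smul_one_add_smul_mul_inv X (Xᵀ * X) a b hc.ne' hunit
  refine ⟨key, fun W _ hW => ?_⟩
  rw [key, Matrix.mul_assoc, transpose_nonsing_inv, ← Matrix.mul_inv_rev, hW]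
end

section
/- Let X ∈ ℝ^{n×n}, let a, b ∈ ℝ and c > 0, and suppose Q ∈ ℝ^{2n×n} has orthonormal columns and R ∈ ℝ^{n×n} is invertible with [√c·X; I_n] = QR. Write Q = [Q₁; Q₂] with Q₁, Q₂ ∈ ℝ^{n×n}. Then X·(aI + b·XᵀX)·(I + c·XᵀX)⁻¹ = (b/c)·X + (1/√c)·(a − b/c)·Q₁Q₂ᵀ. -/
open Matrix

/-- If `[√c·X; I] = Q R` with `Q = [Q₁; Q₂]` having orthonormal columns
and `R` invertible, then
`X (aI + b XᵀX)(I + c XᵀX)⁻¹ = (b/c) X + (1/√c)(a - b/c) Q₁ Q₂ᵀ`. -/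
theorem qdwh_qr_identity {n : ℕ} (X Q₁ Q₂ R : Matrix (Fin n) (Fin n) ℝ)
    (a b c : ℝ) (hc : 0 < c)
    (horth : (Matrix.fromRows Q₁ Q₂)ᵀ * Matrix.fromRows Q₁ Q₂ = 1)
    (hinv : IsUnit R.det)
    (hQR : Matrix.fromRows (Real.sqrt c • X) (1 : Matrix (Fin n) (Fin n) ℝ) =
      Matrix.fromRows Q₁ Q₂ * R) :
    X * (a • (1 : Matrix (Fin n) (Fin n) ℝ) + b • (Xᵀ * X)) *
        (1 + c • (Xᵀ * X))⁻¹ =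
      (b / c) • X + ((1 / Real.sqrt c) * (a - b / c)) • (Q₁ * Q₂ᵀ) := by
  have hs : (0:ℝ) < Real.sqrt c := Real.sqrt_pos.mpr hc
  rw [Matrix.fromRows_mul] at hQR
  obtain ⟨h1, h2⟩ := (Matrix.fromRows_inj.eq_iff).mp hQR
  have horth' : Q₁ᵀ * Q₁ + Q₂ᵀ * Q₂ = 1 := by
    rwa [Matrix.transpose_fromRows, Matrix.fromCols_mul_fromRows] at horth
  -- M = RᵀR
  have hM : (1 : Matrix (Fin n) (Fin n) ℝ) + c • (Xᵀ * X) = Rᵀ * R := by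
    have : Rᵀ * (Q₁ᵀ * Q₁ + Q₂ᵀ * Q₂) * R = Rᵀ * R := by rw [horth', mul_one]
    calc (1 : Matrix (Fin n) (Fin n) ℝ) + c • (Xᵀ * X)
        = (Q₂ * R)ᵀ * (Q₂ * R) + (Q₁ * R)ᵀ * (Q₁ * R) := by
          rw [← h1, ← h2, Matrix.transpose_smul, Matrix.transpose_one]
          simp [Matrix.smul_mul, Matrix.mul_smul, smul_smul,
            Real.mul_self_sqrt hc.le]
      _ = Rᵀ * (Q₁ᵀ * Q₁ + Q₂ᵀ * Q₂) * R := by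
          simp only [Matrix.transpose_mul]
          noncomm_ring
      _ = Rᵀ * R := this
  have hRinv : Invertible R := R.invertibleOfIsUnitDet hinv
  have hQ₂ : Q₂ = R⁻¹ := by
    rw [Matrix.inv_eq_left_inv h2.symm]
  have hMinv : (1 + c • (Xᵀ * X))⁻¹ = R⁻¹ * Rᵀ⁻¹ := by
    rw [hM, Matrix.mul_inv_rev]
  have hQ₁ : Q₁ = Real.sqrt c • X * R⁻¹ := by
    have := congrArg (· * R⁻¹) h1
    simpa [Matrix.mul_assoc, Matrix.mul_nonsing_inv R hinv] using this.symm
  have hXM : X * (1 + c • (Xᵀ * X))⁻¹ = (1 / Real.sqrt c) • (Q₁ * Q₂ᵀ) := by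
    rw [hQ₁, hQ₂, hMinv, Matrix.transpose_nonsing_inv]
    rw [Matrix.smul_mul, Matrix.smul_mul, smul_smul]
    rw [one_div, inv_mul_cancel₀ hs.ne', one_smul, Matrix.mul_assoc]
  have key : (a • (1 : Matrix (Fin n) (Fin n) ℝ) + b • (Xᵀ * X))
      = (b / c) • (1 + c • (Xᵀ * X)) + (a - b / c) • (1 : Matrix (Fin n) (Fin n) ℝ) := by
    rw [smul_add, smul_smul, div_mul_cancel₀ b hc.ne', sub_smul]
    abel
  rw [key, Matrix.mul_add, Matrix.add_mul, Matrix.mul_smul, Matrix.mul_smul,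
    Matrix.smul_mul, Matrix.smul_mul]
  have hMM : (1 + c • (Xᵀ * X)) * (1 + c • (Xᵀ * X))⁻¹ = 1 := by
    rw [hM, Matrix.mul_inv_rev]
    calc Rᵀ * R * (R⁻¹ * Rᵀ⁻¹) = Rᵀ * (R * R⁻¹) * Rᵀ⁻¹ := by
          simp [Matrix.mul_assoc]
      _ = 1 := by
          rw [Matrix.mul_nonsing_inv R hinv, Matrix.mul_one,
            Matrix.mul_nonsing_inv _ (by rwa [Matrix.det_transpose])]
  rw [Matrix.mul_assoc X, hMM, Matrix.mul_one, hXM, smul_smul]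
  ring_nf
end

section
/- Let A ∈ ℝ^{n×n} be symmetric and tridiagonal, and suppose Q ∈ ℝ^{2n×n} has orthonormal columns and R ∈ ℝ^{n×n} is invertible and upper triangular with [A; I_n] = QR. Then for every 1 ≤ k < n, the submatrix Q(1:k, k+1:n) (rows 1..k, columns k+1..n of Q) has rank at most 2, and the submatrix Q(n+1:n+k, k+1:n) has rank at most 2. -/
/-!
From `[A; I] = [Q₁; Q₂] R` one reads off `Q₂ = R⁻¹`, `Q₁ = A R⁻¹` and `RᵀR = A² + I`.
Split the indices after `k`. Since `R` is block upper triangular,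
`(R⁻¹)₁₂ = -R₁₁⁻¹ R₁₂ R₂₂⁻¹`, and comparing the `(1,2)` blocks of `RᵀR = A² + I` gives
`R₁₁ᵀ R₁₂ = A₁₁ A₁₂ + A₁₂ A₂₂`. Tridiagonality makes `A₁₂ = u wᵀ` of rank one, so every row of
`(R⁻¹)₁₂` lies in the span of `wᵀ R₂₂⁻¹` and `wᵀ A₂₂ R₂₂⁻¹`; so does every row of
`(A R⁻¹)₁₂ = A₁₁ (R⁻¹)₁₂ + u wᵀ R₂₂⁻¹`.
-/

open Matrix

namespace Matrix

variable {α p q m : Type*}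

theorem eq_fromBlocks_of_toBlocks₂₁_eq_zero [Zero α] {R : Matrix (p ⊕ q) (p ⊕ q) α}
    (hR : R.toBlocks₂₁ = 0) : R = fromBlocks R.toBlocks₁₁ R.toBlocks₁₂ 0 R.toBlocks₂₂ := by
  rw [← hR, fromBlocks_toBlocks]

variable [Fintype p] [Fintype q]

section CommRing

variable [CommRing α]

theorem toBlocks₁₂_mul (A B : Matrix (p ⊕ q) (p ⊕ q) α) :
    (A * B).toBlocks₁₂ = A.toBlocks₁₁ * B.toBlocks₁₂ + A.toBlocks₁₂ * B.toBlocks₂₂ := by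
  ext i j
  simp [toBlocks₁₁, toBlocks₁₂, toBlocks₂₂, mul_apply, Fintype.sum_sum_type]

theorem transpose_mul_self_eq_of_eq_mul {l n : Type*} [Fintype l] [Fintype n] [DecidableEq n]
    {M Q : Matrix l n α} {T : Matrix n n α} (hQ : Qᵀ * Q = 1) (hM : M = Q * T) :
    Tᵀ * T = Mᵀ * M := by
  rw [hM, transpose_mul, Matrix.mul_assoc, ← Matrix.mul_assoc Qᵀ, hQ, Matrix.one_mul]

variable [DecidableEq p] [DecidableEq q]

theorem toBlocks₁₂_mul_self_add_one (A : Matrix (p ⊕ q) (p ⊕ q) α) :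
    (A * A + 1).toBlocks₁₂ = A.toBlocks₁₁ * A.toBlocks₁₂ + A.toBlocks₁₂ * A.toBlocks₂₂ := by
  ext i j
  simp [toBlocks₁₁, toBlocks₁₂, toBlocks₂₂, mul_apply, Fintype.sum_sum_type]

theorem isUnit_toBlocks_of_toBlocks₂₁_eq_zero {R : Matrix (p ⊕ q) (p ⊕ q) α} (hR : IsUnit R)
    (hR₂₁ : R.toBlocks₂₁ = 0) : IsUnit R.toBlocks₁₁ ∧ IsUnit R.toBlocks₂₂ := by
  rw [eq_fromBlocks_of_toBlocks₂₁_eq_zero hR₂₁] at hR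
  exact isUnit_fromBlocks_zero₂₁.mp hR

theorem toBlocks_inv_of_toBlocks₂₁_eq_zero {R : Matrix (p ⊕ q) (p ⊕ q) α} (hR : IsUnit R)
    (hR₂₁ : R.toBlocks₂₁ = 0) :
    R⁻¹.toBlocks₁₂ = -(R.toBlocks₁₁⁻¹ * R.toBlocks₁₂ * R.toBlocks₂₂⁻¹) ∧
      R⁻¹.toBlocks₂₂ = R.toBlocks₂₂⁻¹ := by
  obtain ⟨h₁₁, h₂₂⟩ := isUnit_toBlocks_of_toBlocks₂₁_eq_zero hR hR₂₁
  rw [eq_fromBlocks_of_toBlocks₂₁_eq_zero hR₂₁,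
    inv_fromBlocks_zero₂₁_of_isUnit_iff _ _ _ (iff_of_true h₁₁ h₂₂)]
  simp

theorem toBlocks₁₂_eq_of_transpose_mul_self {R G : Matrix (p ⊕ q) (p ⊕ q) α} (hR : IsUnit R)
    (hR₂₁ : R.toBlocks₂₁ = 0) (hRG : Rᵀ * R = G) :
    R.toBlocks₁₂ = R.toBlocks₁₁⁻¹ᵀ * G.toBlocks₁₂ := by
  have h₁₁ := (isUnit_toBlocks_of_toBlocks₂₁_eq_zero hR hR₂₁).1
  have hG : R.toBlocks₁₁ᵀ * R.toBlocks₁₂ = G.toBlocks₁₂ := by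
    rw [← hRG, toBlocks₁₂_mul, show Rᵀ.toBlocks₁₂ = R.toBlocks₂₁ᵀ from rfl, hR₂₁,
      transpose_zero, Matrix.zero_mul, add_zero]
    rfl
  rw [← hG, ← Matrix.mul_assoc, ← transpose_mul,
    mul_nonsing_inv _ ((isUnit_iff_isUnit_det _).mp h₁₁), transpose_one, Matrix.one_mul]

theorem exists_toBlocks₁₂_inv_eq_mul [Fintype m] {A R : Matrix (p ⊕ q) (p ⊕ q) α}
    (hR : IsUnit R) (hR₂₁ : R.toBlocks₂₁ = 0) (hRA : Rᵀ * R = A * A + 1)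
    {U : Matrix p m α} {W : Matrix m q α} (hA₁₂ : A.toBlocks₁₂ = U * W) :
    let N := fromRows W (W * A.toBlocks₂₂) * R.toBlocks₂₂⁻¹
    (∃ X : Matrix p (m ⊕ m) α, R⁻¹.toBlocks₁₂ = X * N) ∧
      ∃ Y : Matrix p (m ⊕ m) α, (A * R⁻¹).toBlocks₁₂ = Y * N := by
  intro N
  obtain ⟨hinv₁₂, hinv₂₂⟩ := toBlocks_inv_of_toBlocks₂₁_eq_zero hR hR₂₁
  have hR₁₂ := toBlocks₁₂_eq_of_transpose_mul_self hR hR₂₁ hRA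
  have hG : (A * A + 1).toBlocks₁₂ =
      fromCols (A.toBlocks₁₁ * U) U * fromRows W (W * A.toBlocks₂₂) := by
    rw [toBlocks₁₂_mul_self_add_one, fromCols_mul_fromRows, hA₁₂, Matrix.mul_assoc,
      Matrix.mul_assoc]
  set X := -(R.toBlocks₁₁⁻¹ * R.toBlocks₁₁⁻¹ᵀ * fromCols (A.toBlocks₁₁ * U) U)
  have hX : R⁻¹.toBlocks₁₂ = X * N := by
    simp only [X, N, hinv₁₂, hR₁₂, hG, Matrix.neg_mul, Matrix.mul_assoc]
  refine ⟨⟨X, hX⟩, A.toBlocks₁₁ * X + fromCols U 0, ?_⟩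
  rw [toBlocks₁₂_mul, hX, hinv₂₂, hA₁₂, Matrix.add_mul, Matrix.mul_assoc]
  simp only [N, ← Matrix.mul_assoc, fromCols_mul_fromRows, Matrix.zero_mul, add_zero]

end CommRing

theorem rank_toBlocks₁₂_inv_le [Field α] [DecidableEq p] [DecidableEq q] [Fintype m]
    {A R : Matrix (p ⊕ q) (p ⊕ q) α} (hR : IsUnit R) (hR₂₁ : R.toBlocks₂₁ = 0)
    (hRA : Rᵀ * R = A * A + 1) {U : Matrix p m α} {W : Matrix m q α}
    (hA₁₂ : A.toBlocks₁₂ = U * W) :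
    R⁻¹.toBlocks₁₂.rank ≤ 2 * Fintype.card m ∧
      (A * R⁻¹).toBlocks₁₂.rank ≤ 2 * Fintype.card m := by
  have hN : (fromRows W (W * A.toBlocks₂₂) * R.toBlocks₂₂⁻¹).rank ≤ 2 * Fintype.card m :=
    (rank_le_card_height _).trans (by simp [two_mul])
  obtain ⟨⟨X, hX⟩, Y, hY⟩ := exists_toBlocks₁₂_inv_eq_mul hR hR₂₁ hRA hA₁₂
  rw [hX, hY]
  exact ⟨(rank_mul_le_right _ _).trans hN, (rank_mul_le_right _ _).trans hN⟩

end Matrix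

def finSumFinSubEquiv {n k : ℕ} (hk : k ≤ n) : Fin k ⊕ Fin (n - k) ≃ Fin n :=
  finSumFinEquiv.trans (finCongr (Nat.add_sub_of_le hk))

section FinSplit

variable {α : Type*} {n k : ℕ}

theorem offUpper_eq_toBlocks₁₂ (M : Matrix (Fin n) (Fin n) α) (hkn : k < n) :
    offUpper M k hkn =
      (M.submatrix (finSumFinSubEquiv hkn.le) (finSumFinSubEquiv hkn.le)).toBlocks₁₂ :=
  rfl

theorem Matrix.BlockTriangular.toBlocks₂₁_submatrix_finSumFinSubEquiv [Zero α]
    {R : Matrix (Fin n) (Fin n) α} (hR : R.BlockTriangular id) (hk : k ≤ n) :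
    (R.submatrix (finSumFinSubEquiv hk) (finSumFinSubEquiv hk)).toBlocks₂₁ = 0 := by
  ext i j
  refine hR ?_
  simp only [finSumFinSubEquiv, Equiv.trans_apply, finSumFinEquiv_apply_left,
    finSumFinEquiv_apply_right, finCongr_apply, id_eq, Fin.lt_def, Fin.val_cast, Fin.val_castAdd,
    Fin.val_natAdd]
  omega

theorem offUpper_eq_single_of_tridiagonal [Zero α] {A : Matrix (Fin n) (Fin n) α}
    (hA : ∀ i j : Fin n, (1 : ℤ) < |(i : ℤ) - (j : ℤ)| → A i j = 0) (hk : 1 ≤ k) (hkn : k < n) :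
    offUpper A k hkn =
      single ⟨k - 1, by omega⟩ ⟨0, by omega⟩ (A ⟨k - 1, by omega⟩ ⟨k, hkn⟩) := by
  ext i j
  by_cases hij : (i : ℕ) = k - 1 ∧ (j : ℕ) = 0
  · obtain ⟨hi, hj⟩ := hij
    simp [offUpper, single_apply, Fin.ext_iff, hi, hj]
  · simp only [offUpper, submatrix_apply, single, of_apply, Fin.ext_iff]
    rw [if_neg (by omega)]
    refine hA _ _ ?_
    push_cast
    rw [abs_of_nonpos (by omega)]
    omega

end FinSplit

theorem rank_offUpper_inv_le_two {K : Type*} [Field K] {n k : ℕ}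
    {A R : Matrix (Fin n) (Fin n) K}
    (hR : IsUnit R.det) (hupper : R.BlockTriangular id) (hRA : Rᵀ * R = A * A + 1)
    (htri : ∀ i j : Fin n, (1 : ℤ) < |(i : ℤ) - (j : ℤ)| → A i j = 0)
    (hk : 1 ≤ k) (hkn : k < n) :
    (offUpper (A * R⁻¹) k hkn).rank ≤ 2 ∧ (offUpper R⁻¹ k hkn).rank ≤ 2 := by
  set e := finSumFinSubEquiv hkn.le
  have hR' : IsUnit (R.submatrix e e) :=
    (isUnit_iff_isUnit_det _).mpr (by rwa [det_submatrix_equiv_self])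
  have hRA' : (R.submatrix e e)ᵀ * R.submatrix e e = A.submatrix e e * A.submatrix e e + 1 := by
    rw [transpose_submatrix, submatrix_mul_equiv, hRA, submatrix_mul_equiv,
      ← submatrix_one_equiv e]
    rfl
  have hA₁₂ : (A.submatrix e e).toBlocks₁₂ =
      single (⟨k - 1, by omega⟩ : Fin k) () (1 : K) *
        single () (⟨0, by omega⟩ : Fin (n - k)) (A ⟨k - 1, by omega⟩ ⟨k, hkn⟩) := by
    rw [← offUpper_eq_toBlocks₁₂ A hkn, offUpper_eq_single_of_tridiagonal htri hk hkn,
      single_mul_single_same, one_mul]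
  have h :=
    rank_toBlocks₁₂_inv_le hR' (hupper.toBlocks₂₁_submatrix_finSumFinSubEquiv _) hRA' hA₁₂
  rw [offUpper_eq_toBlocks₁₂, offUpper_eq_toBlocks₁₂, ← submatrix_mul_equiv _ _ _ e,
    ← inv_submatrix_equiv]
  simpa using h.symm

/-- Let `A` be symmetric tridiagonal and `[A; I] = [Q₁; Q₂] R` a thin QR
factorization with orthonormal columns and `R` invertible upper triangular. Then for every
`1 ≤ k < n`, the blocks `Q(1:k, k+1:n) = Q₁(1:k, k+1:n)` and
`Q(n+1:n+k, k+1:n) = Q₂(1:k, k+1:n)` have rank at most `2`. -/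
theorem qr_tridiagonal_offdiag_rank {n : ℕ} (A Q₁ Q₂ R : Matrix (Fin n) (Fin n) ℝ)
    (hsymm : Aᵀ = A)
    (htri : ∀ i j : Fin n, (1 : ℤ) < |(i : ℤ) - (j : ℤ)| → A i j = 0)
    (horth : (Matrix.fromRows Q₁ Q₂)ᵀ * Matrix.fromRows Q₁ Q₂ = 1)
    (hinv : IsUnit R.det) (hupper : R.BlockTriangular id)
    (hQR : Matrix.fromRows A (1 : Matrix (Fin n) (Fin n) ℝ) =
      Matrix.fromRows Q₁ Q₂ * R)
    (k : ℕ) (hk1 : 1 ≤ k) (hkn : k < n) :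
    (offUpper Q₁ k hkn).rank ≤ 2 ∧ (offUpper Q₂ k hkn).rank ≤ 2 := by
  obtain ⟨hA, hI⟩ := (fromRows_ext_iff _ _ _ _).mp (hQR.trans (fromRows_mul _ _ _))
  have hQ₂ : Q₂ = R⁻¹ := (inv_eq_left_inv hI.symm).symm
  have hQ₁ : Q₁ = A * R⁻¹ := by rw [hA, mul_nonsing_inv_cancel_right _ _ hinv]
  have hRA : Rᵀ * R = A * A + 1 := by
    rw [transpose_mul_self_eq_of_eq_mul horth hQR, transpose_fromRows, fromCols_mul_fromRows,
      hsymm, transpose_one, Matrix.one_mul]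
  rw [hQ₁, hQ₂]
  exact rank_offUpper_inv_le_two hinv hupper hRA htri hk1 hkn
end

section
/- Let A ∈ ℝ^{n×n} be symmetric and tridiagonal. Then for every 1 ≤ k < n, the off-diagonal blocks (A·(I + A²)⁻¹)(1:k, k+1:n) and (A·(I + A²)⁻¹)(k+1:n, 1:k) have rank at most 2. -/
/-!
Write `P = 1 + A²` and `M = A P⁻¹`, so that `P M = A`. Cut at `k`: the (1,2) block of this
identity reads `P₁₁ M₁₂ = A₁₂ - P₁₂ M₂₂`. Tridiagonality makes `A₁₂ = u e₁ᵀ` of rank one, where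
`u` is column `k + 1` of `A` restricted to the first `k` rows, and then
`P₁₂ = (A²)₁₂ = A₁₁ A₁₂ + A₁₂ A₂₂`, so every column of `P₁₁ M₁₂` lies in `span {u, A₁₁ u}`.
As a principal submatrix of the positive definite `P`, the block `P₁₁` is invertible, hence
`rank M₁₂ ≤ 2`. Since `A` commutes with `P⁻¹`, `M` is symmetric and `M₂₁ = M₁₂ᵀ`.
-/

open Matrix

def Fin.natAddSub {n : ℕ} (k : ℕ) (j : Fin (n - k)) : Fin n :=
  ⟨k + j, by omega⟩

namespace Matrix

variable {α : Type*} {n k : ℕ}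

def topLeft (M : Matrix (Fin n) (Fin n) α) (k : ℕ) (hk : k < n) : Matrix (Fin k) (Fin k) α :=
  M.submatrix (Fin.castLE hk.le) (Fin.castLE hk.le)

def bottomRight (M : Matrix (Fin n) (Fin n) α) (k : ℕ) :
    Matrix (Fin (n - k)) (Fin (n - k)) α :=
  M.submatrix (Fin.natAddSub k) (Fin.natAddSub k)

lemma sum_univ_eq_sum_castLE_add_sum_natAddSub [AddCommMonoid α] (hk : k < n) (f : Fin n → α) :
    ∑ l, f l =
      ∑ i : Fin k, f (Fin.castLE hk.le i) + ∑ j : Fin (n - k), f (Fin.natAddSub k j) := by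
  rw [← Equiv.sum_comp (finCongr (by omega : k + (n - k) = n)) f, Fin.sum_univ_add]
  rfl

lemma offUpper_mul [NonUnitalNonAssocSemiring α] (X Y : Matrix (Fin n) (Fin n) α) (hk : k < n) :
    offUpper (X * Y) k hk =
      topLeft X k hk * offUpper Y k hk + offUpper X k hk * bottomRight Y k := by
  ext i j
  rw [offUpper, submatrix_apply, mul_apply, sum_univ_eq_sum_castLE_add_sum_natAddSub hk]
  rfl

lemma offUpper_one [Zero α] [One α] (hk : k < n) :
    offUpper (1 : Matrix (Fin n) (Fin n) α) k hk = 0 := by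
  ext i j
  refine one_apply_ne fun h => ?_
  have hik : i.1 < k := i.2
  have hij : i.1 = k + j.1 := congrArg Fin.val h
  omega

lemma eq_vecMulVec_single_of_apply_eq_zero {m p : Type*} [DecidableEq p] [MulZeroOneClass α]
    (B : Matrix m p α) (j₀ : p) (hB : ∀ i j, j ≠ j₀ → B i j = 0) :
    B = vecMulVec (fun i => B i j₀) (Pi.single j₀ 1) := by
  ext i j
  by_cases hj : j = j₀
  · subst hj; simp [vecMulVec_apply]
  · simp [vecMulVec_apply, hj, hB i j hj]

lemma offUpper_eq_vecMulVec_of_tridiagonal [MulZeroOneClass α] (A : Matrix (Fin n) (Fin n) α)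
    (htri : ∀ i j : Fin n, (1 : ℤ) < |(i : ℤ) - (j : ℤ)| → A i j = 0) (hk : k < n) :
    offUpper A k hk =
      vecMulVec (fun i => A (Fin.castLE hk.le i) ⟨k, hk⟩)
        (Pi.single (⟨0, by omega⟩ : Fin (n - k)) 1) := by
  refine eq_vecMulVec_single_of_apply_eq_zero (offUpper A k hk) ⟨0, by omega⟩
    fun i j hj => htri _ _ ?_
  have hj0 : j.1 ≠ 0 := fun h => hj (Fin.ext h)
  have hik : i.1 < k := i.2
  rw [lt_abs]
  right
  push_cast
  omega

lemma offUpper_transpose (M : Matrix (Fin n) (Fin n) α) (hk : k < n) :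
    offUpper Mᵀ k hk = (offLower M k hk)ᵀ :=
  rfl

lemma offUpper_sq_of_offUpper_eq_vecMulVec [Semiring α] {A : Matrix (Fin n) (Fin n) α}
    (hk : k < n) {u : Fin k → α} {w : Fin (n - k) → α}
    (hA : offUpper A k hk = vecMulVec u w) :
    offUpper (A ^ 2) k hk =
      vecMulVec (topLeft A k hk *ᵥ u) w + vecMulVec u (w ᵥ* bottomRight A k) := by
  rw [sq, offUpper_mul, hA, mul_vecMulVec, vecMulVec_mul]

lemma topLeft_one_add_sq_mul_offUpper [Ring α] {A X : Matrix (Fin n) (Fin n) α} (hk : k < n)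
    {u : Fin k → α} {w : Fin (n - k) → α} (hA : offUpper A k hk = vecMulVec u w)
    (hX : (1 + A ^ 2) * X = A) :
    topLeft (1 + A ^ 2) k hk * offUpper X k hk =
      vecMulVec u (w - (w ᵥ* bottomRight A k) ᵥ* bottomRight X k) +
        vecMulVec (topLeft A k hk *ᵥ u) (-(w ᵥ* bottomRight X k)) := by
  have hP : offUpper (1 + A ^ 2) k hk =
      vecMulVec (topLeft A k hk *ᵥ u) w + vecMulVec u (w ᵥ* bottomRight A k) := by
    rw [← offUpper_sq_of_offUpper_eq_vecMulVec hk hA, ← zero_add (offUpper (A ^ 2) k hk),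
      ← offUpper_one hk]
    rfl
  have h := offUpper_mul (1 + A ^ 2) X hk
  rw [hX, hA, hP, Matrix.add_mul, vecMulVec_mul, vecMulVec_mul] at h
  rw [eq_sub_of_add_eq h.symm]
  ext i j
  simp only [sub_apply, add_apply, vecMulVec_apply, Pi.sub_apply, Pi.neg_apply, vecMul_vecMul]
  noncomm_ring

lemma rank_add_le {K m p : Type*} [Field K] [Fintype p] (X Y : Matrix m p K) :
    (X + Y).rank ≤ X.rank + Y.rank := by
  rw [rank, rank, rank, mulVecLin_add]
  have hle : LinearMap.range (X.mulVecLin + Y.mulVecLin) ≤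
      LinearMap.range X.mulVecLin ⊔ LinearMap.range Y.mulVecLin := by
    rintro _ ⟨x, rfl⟩
    exact Submodule.mem_sup.2 ⟨_, ⟨x, rfl⟩, _, ⟨x, rfl⟩, rfl⟩
  exact (Submodule.finrank_mono hle).trans (Submodule.finrank_add_le_finrank_add_finrank _ _)

lemma IsHermitian.posDef_one_add_sq {R m : Type*} [Ring R] [PartialOrder R] [StarRing R]
    [StarOrderedRing R] [NoZeroDivisors R] [Fintype m] [DecidableEq m] {A : Matrix m m R}
    (hA : A.IsHermitian) : (1 + A ^ 2).PosDef := by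
  have h := PosDef.one.add_posSemidef (posSemidef_conjTranspose_mul_self A)
  rwa [hA.eq, ← sq] at h

lemma rank_offUpper_le_two_of_one_add_sq_mul_eq {K : Type*} [Field K] [PartialOrder K]
    [StarRing K] [StarOrderedRing K] {A X : Matrix (Fin n) (Fin n) K} (hA : A.IsHermitian)
    (hk : k < n) {u : Fin k → K} {w : Fin (n - k) → K} (hAuw : offUpper A k hk = vecMulVec u w)
    (hX : (1 + A ^ 2) * X = A) : (offUpper X k hk).rank ≤ 2 := by
  have hunit : IsUnit (topLeft (1 + A ^ 2) k hk).det :=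
    (isUnit_iff_isUnit_det _).1
      (hA.posDef_one_add_sq.submatrix (Fin.castLE_injective hk.le)).isUnit
  rw [← rank_mul_eq_right_of_isUnit_det _ _ hunit, topLeft_one_add_sq_mul_offUpper hk hAuw hX]
  exact (rank_add_le _ _).trans (add_le_add (rank_vecMulVec_le _ _) (rank_vecMulVec_le _ _))

end Matrix

theorem offdiag_rank_tridiagonal_product_general {n : ℕ} (A : Matrix (Fin n) (Fin n) ℝ)
    (hsymm : Aᵀ = A)
    (htri : ∀ i j : Fin n, (1 : ℤ) < |(i : ℤ) - (j : ℤ)| → A i j = 0)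
    (k : ℕ) (hkn : k < n) :
    (offUpper (A * (1 + A ^ 2)⁻¹) k hkn).rank ≤ 2 ∧
    (offLower (A * (1 + A ^ 2)⁻¹) k hkn).rank ≤ 2 := by
  have hA : A.IsHermitian := isHermitian_iff_isSymm.2 hsymm
  have hP : (1 + A ^ 2).PosDef := hA.posDef_one_add_sq
  have hcomm : Commute A (1 + A ^ 2)⁻¹ := by
    simpa using
      Matrix.Commute.zpow_right ((Commute.one_right A).add_right (Commute.self_pow A 2)) (-1)
  have hPM : (1 + A ^ 2) * (A * (1 + A ^ 2)⁻¹) = A := by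
    rw [hcomm.eq, ← mul_assoc, mul_nonsing_inv _ ((isUnit_iff_isUnit_det _).1 hP.isUnit), one_mul]
  have hupper := rank_offUpper_le_two_of_one_add_sq_mul_eq hA hkn
    (offUpper_eq_vecMulVec_of_tridiagonal A htri hkn) hPM
  have hMsymm : (A * (1 + A ^ 2)⁻¹)ᵀ = A * (1 + A ^ 2)⁻¹ :=
    isHermitian_iff_isSymm.1 ((hA.commute_iff hP.isHermitian.inv).1 hcomm)
  refine ⟨hupper, ?_⟩
  rwa [← rank_transpose, ← offUpper_transpose, hMsymm]

/-- For a symmetric tridiagonal `A ∈ ℝ^{n×n}` and every `1 ≤ k < n`, the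
off-diagonal blocks of `A (I + A²)⁻¹` have rank at most `2`. -/
theorem offdiag_rank_tridiagonal_product {n : ℕ} (A : Matrix (Fin n) (Fin n) ℝ)
    (hsymm : Aᵀ = A)
    (htri : ∀ i j : Fin n, (1 : ℤ) < |(i : ℤ) - (j : ℤ)| → A i j = 0)
    (k : ℕ) (hk1 : 1 ≤ k) (hkn : k < n) :
    (offUpper (A * (1 + A ^ 2)⁻¹) k hkn).rank ≤ 2 ∧
    (offLower (A * (1 + A ^ 2)⁻¹) k hkn).rank ≤ 2 :=
  offdiag_rank_tridiagonal_product_general A hsymm htri k hkn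
end

section
/- Let A ∈ ℝ^{n×n} be symmetric and b-banded with b ≥ 1, and suppose Q ∈ ℝ^{2n×n} has orthonormal columns and R ∈ ℝ^{n×n} is invertible and upper triangular with [A; I_n] = QR. Then for every 1 ≤ k < n, the submatrix Q(1:k, k+1:n) (rows 1..k, columns k+1..n of Q) has rank at most 2b, and the submatrix Q(n+1:n+k, k+1:n) has rank at most 2b. -/
open Matrix

-- rank of a matrix supported on rows i with i.1 + b' ≥ k is ≤ b'
lemma rank_le_of_rows_s13 {k m b' : ℕ} (S : Matrix (Fin k) (Fin m) ℝ)
    (h : ∀ i j, i.1 + b' < k → S i j = 0) : S.rank ≤ b' := by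
  rcases Nat.eq_zero_or_pos k with hk | hk
  · subst hk
    exact le_trans (by simpa using S.rank_le_card_height) (Nat.zero_le _)
  · set E : Matrix (Fin k) (Fin b') ℝ := fun i t => if i.1 + b' = k + t.1 then 1 else 0 with hE
    set S' : Matrix (Fin b') (Fin m) ℝ := fun t j => S ⟨k + t.1 - b', by omega⟩ j with hS'
    have hfac : S = E * S' := by
      ext i j
      rcases lt_or_ge (i.1 + b') k with hi | hi
      · rw [h i j hi]
        rw [Matrix.mul_apply]
        apply (Finset.sum_eq_zero ?_).symm
        intro t _
        have : ¬ (i.1 + b' = k + t.1) := by omega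
        simp [hE, this]
      · rw [Matrix.mul_apply]
        have hi1 : i.1 < k := i.2
        rw [Fintype.sum_eq_single (⟨i.1 + b' - k, by omega⟩ : Fin b')]
        · have : i.1 + b' = k + (i.1 + b' - k) := by omega
          simp only [hE, hS', if_pos this, one_mul]
          congr 1
          exact Fin.ext (by simp only [Fin.val_mk]; omega)
        · intro t ht
          have : ¬ (i.1 + b' = k + t.1) := by
            intro hcon
            exact ht (Fin.ext (by simp only [Fin.val_mk]; omega))
          simp [hE, this]
    calc S.rank = (E * S').rank := by rw [hfac]
      _ ≤ S'.rank := Matrix.rank_mul_le_right _ _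
      _ ≤ b' := by simpa using S'.rank_le_card_height

lemma block_eq {n k : ℕ} (hkn : k < n) (M P B : Matrix (Fin n) (Fin n) ℝ)
    (hMP : M * P = B) :
    M.submatrix (fun i : Fin k => (⟨i.1, i.2.trans hkn⟩ : Fin n))
        (fun i : Fin k => (⟨i.1, i.2.trans hkn⟩ : Fin n)) * offUpper P k hkn
      + offUpper M k hkn *
        P.submatrix (fun j : Fin (n-k) => (⟨k + j.1, by omega⟩ : Fin n))
          (fun j : Fin (n-k) => (⟨k + j.1, by omega⟩ : Fin n))
      = offUpper B k hkn := by
  ext i j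
  obtain ⟨e, hel, her⟩ : ∃ e : Fin k ⊕ Fin (n-k) ≃ Fin n,
      (∀ l : Fin k, e (Sum.inl l) = (⟨l.1, l.2.trans hkn⟩ : Fin n)) ∧
      (∀ l : Fin (n-k), e (Sum.inr l) = (⟨k + l.1, by omega⟩ : Fin n)) := by
    refine ⟨finSumFinEquiv.trans (finCongr (by omega)), fun l => Fin.ext ?_, fun l => Fin.ext ?_⟩
    · simp
    · simp
  have hsum := Fintype.sum_equiv e
    (fun x => M ⟨i.1, i.2.trans hkn⟩ (e x) * P (e x) ⟨k + j.1, by omega⟩)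
    (fun l => M ⟨i.1, i.2.trans hkn⟩ l * P l ⟨k + j.1, by omega⟩) (fun x => rfl)
  rw [Fintype.sum_sum_type] at hsum
  simp only [hel, her] at hsum
  simp only [Matrix.add_apply, Matrix.mul_apply, offUpper, submatrix_apply, ← hMP,
    Matrix.mul_apply]
  exact hsum

lemma rank_offUpper_le {n k bb : ℕ} (hkn : k < n) (M P B : Matrix (Fin n) (Fin n) ℝ)
    (hMP : M * P = B)
    (hdet : IsUnit (M.submatrix (fun i : Fin k => (⟨i.1, i.2.trans hkn⟩ : Fin n))
        (fun i : Fin k => (⟨i.1, i.2.trans hkn⟩ : Fin n))).det)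
    (hMband : ∀ (i : Fin k) (j : Fin (n-k)), i.1 + bb < k → offUpper M k hkn i j = 0)
    (hBband : ∀ (i : Fin k) (j : Fin (n-k)), i.1 + bb < k → offUpper B k hkn i j = 0) :
    (offUpper P k hkn).rank ≤ bb := by
  set M11 := M.submatrix (fun i : Fin k => (⟨i.1, i.2.trans hkn⟩ : Fin n))
      (fun i : Fin k => (⟨i.1, i.2.trans hkn⟩ : Fin n)) with hM11
  set P22 := P.submatrix (fun j : Fin (n-k) => (⟨k + j.1, by omega⟩ : Fin n))
      (fun j : Fin (n-k) => (⟨k + j.1, by omega⟩ : Fin n)) with hP22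
  have key : M11 * offUpper P k hkn + offUpper M k hkn * P22 = offUpper B k hkn :=
    block_eq hkn M P B hMP
  set S : Matrix (Fin k) (Fin (n-k)) ℝ := offUpper B k hkn - offUpper M k hkn * P22 with hS
  have h2 : M11 * offUpper P k hkn = S := eq_sub_of_add_eq key
  have h3 : offUpper P k hkn = M11⁻¹ * S := by
    rw [← h2, ← Matrix.mul_assoc, Matrix.nonsing_inv_mul _ hdet, Matrix.one_mul]
  rw [h3]
  refine le_trans (Matrix.rank_mul_le_right _ _) (rank_le_of_rows_s13 S ?_)
  intro i j hij
  simp only [hS, Matrix.sub_apply, Matrix.mul_apply, hBband i j hij, sub_eq_zero]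
  exact (Finset.sum_eq_zero fun l _ => by rw [hMband i l hij, zero_mul]).symm

/-- Let `A` be symmetric `b`-banded (`b ≥ 1`) and `[A; I] = [Q₁; Q₂] R` a
thin QR factorization with orthonormal columns and `R` invertible upper triangular. Then for
every `1 ≤ k < n`, the blocks `Q(1:k, k+1:n) = Q₁(1:k, k+1:n)` and
`Q(n+1:n+k, k+1:n) = Q₂(1:k, k+1:n)` have rank at most `2b`. -/
theorem qr_banded_offdiag_rank {n b : ℕ} (hb : 1 ≤ b)
    (A Q₁ Q₂ R : Matrix (Fin n) (Fin n) ℝ)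
    (hsymm : Aᵀ = A)
    (hband : ∀ i j : Fin n, (b : ℤ) < |(i : ℤ) - (j : ℤ)| → A i j = 0)
    (horth : (Matrix.fromRows Q₁ Q₂)ᵀ * Matrix.fromRows Q₁ Q₂ = 1)
    (hinv : IsUnit R.det) (hupper : R.BlockTriangular id)
    (hQR : Matrix.fromRows A (1 : Matrix (Fin n) (Fin n) ℝ) =
      Matrix.fromRows Q₁ Q₂ * R)
    (k : ℕ) (hk1 : 1 ≤ k) (hkn : k < n) :
    (offUpper Q₁ k hkn).rank ≤ 2 * b ∧ (offUpper Q₂ k hkn).rank ≤ 2 * b := by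
  -- band hypothesis in ℕ form
  have hb' : ∀ i j : Fin n, ((j : ℕ) + b < i ∨ (i : ℕ) + b < j) → A i j = 0 := by
    intro i j h
    apply hband
    rw [lt_abs]
    push_cast
    omega
  -- extract the two rows of the QR equation
  rw [Matrix.fromRows_mul] at hQR
  obtain ⟨hA, hI⟩ := (Matrix.fromRows_ext_iff _ _ _ _).mp hQR
  -- orthonormality
  rw [Matrix.transpose_fromRows, Matrix.fromCols_mul_fromRows] at horth
  -- R * Q₂ = 1
  have hRQ : R * Q₂ = 1 := mul_eq_one_comm.mp hI.symm
  have hQ1 : A * Q₂ = Q₁ := by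
    rw [hA, Matrix.mul_assoc, hRQ, Matrix.mul_one]
  -- the Gram matrix
  set M : Matrix (Fin n) (Fin n) ℝ := Aᵀ * A + 1 with hMdef
  have hM : M = Rᵀ * R := by
    calc M = (Q₁ * R)ᵀ * (Q₁ * R) + (Q₂ * R)ᵀ * (Q₂ * R) := by
            rw [← hA, ← hI]; simp [hMdef]
      _ = Rᵀ * (Q₁ᵀ * Q₁ + Q₂ᵀ * Q₂) * R := by
            simp only [Matrix.transpose_mul, Matrix.mul_add, Matrix.add_mul, Matrix.mul_assoc]
      _ = Rᵀ * R := by rw [horth, Matrix.mul_one]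
  have hMQ2 : M * Q₂ = Rᵀ := by rw [hM, Matrix.mul_assoc, hRQ, Matrix.mul_one]
  have hMQ1 : M * Q₁ = A * Rᵀ := by
    have hcomm : M * A = A * M := by
      simp only [hMdef, hsymm, Matrix.add_mul, Matrix.mul_add, Matrix.one_mul, Matrix.mul_one,
        Matrix.mul_assoc]
    rw [← hQ1, ← Matrix.mul_assoc, hcomm, Matrix.mul_assoc, hMQ2]
  -- invertibility of the principal block
  have hdet : IsUnit ((M.submatrix (fun i : Fin k => (⟨i.1, i.2.trans hkn⟩ : Fin n))
      (fun i : Fin k => (⟨i.1, i.2.trans hkn⟩ : Fin n))).det) := by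
    have hinj : Function.Injective (fun i : Fin k => (⟨i.1, i.2.trans hkn⟩ : Fin n)) := by
      intro x y hxy
      simp only [Fin.mk.injEq] at hxy
      exact Fin.ext hxy
    have hsplit : M.submatrix (fun i : Fin k => (⟨i.1, i.2.trans hkn⟩ : Fin n))
        (fun i : Fin k => (⟨i.1, i.2.trans hkn⟩ : Fin n))
        = (Aᵀ * A).submatrix (fun i : Fin k => (⟨i.1, i.2.trans hkn⟩ : Fin n))
          (fun i : Fin k => (⟨i.1, i.2.trans hkn⟩ : Fin n)) + 1 := by
      rw [hMdef]
      ext i j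
      simp only [Matrix.submatrix_apply, Matrix.add_apply, Matrix.one_apply, Fin.mk.injEq,
        Fin.val_inj]
    have hpsd : ((Aᵀ * A).submatrix (fun i : Fin k => (⟨i.1, i.2.trans hkn⟩ : Fin n))
        (fun i : Fin k => (⟨i.1, i.2.trans hkn⟩ : Fin n))).PosSemidef := by
      have : (Aᴴ * A).PosSemidef := Matrix.posSemidef_conjTranspose_mul_self A
      have hAt : Aᴴ = Aᵀ := by ext i j; simp [Matrix.conjTranspose_apply]
      exact (hAt ▸ this).submatrix _
    have hpd : (M.submatrix (fun i : Fin k => (⟨i.1, i.2.trans hkn⟩ : Fin n))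
        (fun i : Fin k => (⟨i.1, i.2.trans hkn⟩ : Fin n))).PosDef := by
      rw [hsplit]
      exact Matrix.PosDef.posSemidef_add hpsd Matrix.PosDef.one
    exact hpd.det_pos.ne'.isUnit
  -- M is 2b-banded (in the relevant block)
  have hMband : ∀ (i : Fin k) (j : Fin (n-k)), i.1 + 2*b < k → offUpper M k hkn i j = 0 := by
    intro i j hij
    simp only [offUpper, Matrix.submatrix_apply, hMdef, Matrix.add_apply, Matrix.mul_apply,
      Matrix.transpose_apply, Matrix.one_apply]
    have hne : (⟨i.1, i.2.trans hkn⟩ : Fin n) ≠ ⟨k + j.1, by omega⟩ := by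
      intro hcon
      have := congrArg Fin.val hcon
      simp only [Fin.val_mk] at this
      omega
    rw [if_neg hne, add_zero]
    apply Finset.sum_eq_zero
    intro l _
    rcases lt_or_ge (l.1 + b) (k + j.1) with hl | hl
    · rw [hb' l ⟨k + j.1, by omega⟩ (Or.inr (by simpa using hl)), mul_zero]
    · rw [hb' l ⟨i.1, i.2.trans hkn⟩ (Or.inl (by simp only [Fin.val_mk]; omega)), zero_mul]
  constructor
  · -- Q₁ block
    apply rank_offUpper_le hkn M Q₁ (A * Rᵀ) hMQ1 hdet hMband
    intro i j hij
    simp only [offUpper, Matrix.submatrix_apply, Matrix.mul_apply, Matrix.transpose_apply]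
    apply Finset.sum_eq_zero
    intro l _
    rcases lt_or_ge l.1 (k + j.1) with hl | hl
    · have h0 : R (⟨k + j.1, by omega⟩ : Fin n) l = 0 :=
        hupper (by simp only [id_eq, Fin.lt_def, Fin.val_mk]; omega)
      rw [h0, mul_zero]
    · rw [hb' ⟨i.1, i.2.trans hkn⟩ l (Or.inr (by simp only [Fin.val_mk]; omega)), zero_mul]
  · -- Q₂ block
    apply rank_offUpper_le hkn M Q₂ Rᵀ hMQ2 hdet hMband
    intro i j hij
    simp only [offUpper, Matrix.submatrix_apply, Matrix.transpose_apply]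
    exact hupper (by simp only [id_eq, Fin.lt_def, Fin.val_mk]; omega)
end

section
/- Let A ∈ ℝ^{n×n} be symmetric and b-banded with b ≥ 1. Then for every 1 ≤ k < n, the off-diagonal blocks (A·(I + A²)⁻¹)(1:k, k+1:n) and (A·(I + A²)⁻¹)(k+1:n, 1:k) have rank at most 2b. -/
open Matrix

section aux

variable {m n m' n' : Type*} [Fintype m] [Fintype n] [Fintype m'] [Fintype n']
  [DecidableEq m] [DecidableEq n]

set_option linter.unusedSectionVars false

lemma myrank_submatrix_le (A : Matrix m n ℝ) (f : m' → m) (g : n' → n) :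
    (A.submatrix f g).rank ≤ A.rank := by
  have h : A.submatrix f g =
      (Matrix.of fun i x => if x = f i then (1:ℝ) else 0) *
        (A * Matrix.of fun y j => if y = g j then (1:ℝ) else 0) := by
    ext i j
    simp [Matrix.mul_apply, ite_mul, mul_ite, Finset.sum_ite_eq, Finset.sum_ite_eq']
  rw [h]
  exact le_trans (Matrix.rank_mul_le_right _ _) (Matrix.rank_mul_le_left _ _)

lemma dotProduct_self_nonneg' (v : m → ℝ) : 0 ≤ v ⬝ᵥ v :=
  Finset.sum_nonneg fun i _ => mul_self_nonneg _

lemma mydet_fromBlocks_sym (X : Matrix m m ℝ) (hX : Xᵀ = X) :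
    IsUnit (fromBlocks X (-1) (1 : Matrix m m ℝ) X).det := by
  rw [isUnit_iff_ne_zero]
  intro h0
  obtain ⟨v, hv, hmv⟩ := Matrix.exists_mulVec_eq_zero_iff.mpr h0
  set x := v ∘ Sum.inl with hx
  set y := v ∘ Sum.inr with hy
  rw [← Sum.elim_comp_inl_inr v, Matrix.fromBlocks_mulVec] at hmv
  have h1 : X *ᵥ x + (-1 : Matrix m m ℝ) *ᵥ y = 0 := funext fun i => congrFun hmv (Sum.inl i)
  have h2 : (1 : Matrix m m ℝ) *ᵥ x + X *ᵥ y = 0 := funext fun i => congrFun hmv (Sum.inr i)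
  rw [Matrix.neg_mulVec, Matrix.one_mulVec] at h1
  rw [Matrix.one_mulVec] at h2
  have hyx : y = X *ᵥ x := by
    have := eq_neg_of_add_eq_zero_left h1
    simpa [neg_neg] using this.symm
  rw [hyx] at h2
  have key : ∀ w : m → ℝ, w ⬝ᵥ (X *ᵥ (X *ᵥ w)) = (X *ᵥ w) ⬝ᵥ (X *ᵥ w) := by
    intro w
    rw [dotProduct_mulVec]
    congr 1
    rw [← hX, Matrix.vecMul_transpose, hX]
  have hz : x ⬝ᵥ x + (X *ᵥ x) ⬝ᵥ (X *ᵥ x) = 0 := by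
    rw [← key x, ← dotProduct_add, h2, dotProduct_zero]
  have hx0 : x = 0 := by
    have h3 : x ⬝ᵥ x = 0 :=
      le_antisymm (by nlinarith [dotProduct_self_nonneg' (X *ᵥ x)]) (dotProduct_self_nonneg' x)
    exact dotProduct_self_eq_zero.mp h3
  have hy0 : y = 0 := by rw [hyx, hx0, Matrix.mulVec_zero]
  apply hv
  rw [← Sum.elim_comp_inl_inr v, ← hx, ← hy, hx0, hy0]
  simp

lemma mydet_one_add_sq (X : Matrix m m ℝ) (hX : Xᵀ = X) :
    IsUnit (1 + X ^ 2).det := by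
  rw [isUnit_iff_ne_zero]
  intro h0
  obtain ⟨v, hv, hmv⟩ := Matrix.exists_mulVec_eq_zero_iff.mpr h0
  have h2 : v + X *ᵥ (X *ᵥ v) = 0 := by
    have := hmv
    rwa [Matrix.add_mulVec, Matrix.one_mulVec, pow_two, ← Matrix.mulVec_mulVec] at this
  have key : ∀ w : m → ℝ, w ⬝ᵥ (X *ᵥ (X *ᵥ w)) = (X *ᵥ w) ⬝ᵥ (X *ᵥ w) := by
    intro w
    rw [dotProduct_mulVec]
    congr 1
    rw [← hX, Matrix.vecMul_transpose, hX]
  have hz : v ⬝ᵥ v + (X *ᵥ v) ⬝ᵥ (X *ᵥ v) = 0 := by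
    rw [← key v, ← dotProduct_add, h2, dotProduct_zero]
  apply hv
  have h3 : v ⬝ᵥ v = 0 :=
    le_antisymm (by nlinarith [dotProduct_self_nonneg' (X *ᵥ v)]) (dotProduct_self_nonneg' v)
  exact dotProduct_self_eq_zero.mp h3

end aux

lemma band_factor {n b k : ℕ} (hkn : k < n) (A : Matrix (Fin n) (Fin n) ℝ)
    (hband : ∀ i j : Fin n, (b : ℤ) < |(i : ℤ) - (j : ℤ)| → A i j = 0) :
    ∃ (E : Matrix (Fin k) (Fin b) ℝ) (F : Matrix (Fin b) (Fin (n - k)) ℝ),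
      offUpper A k hkn = E * F := by
  refine ⟨Matrix.of fun i t => if (i : ℕ) + b = k + (t : ℕ) then 1 else 0,
    Matrix.of fun t j => if h : b ≤ k + (t : ℕ) ∧ k + (t : ℕ) - b < n
      then A ⟨k + (t : ℕ) - b, h.2⟩ ⟨k + (j : ℕ), by have := j.2; omega⟩ else 0, ?_⟩
  ext i j
  rw [Matrix.mul_apply]
  simp only [Matrix.of_apply, ite_mul, one_mul, zero_mul]
  by_cases hik : k ≤ (i : ℕ) + b
  · have ht0 : ∀ t : Fin b, ((i : ℕ) + b = k + (t : ℕ)) ↔ t = ⟨(i : ℕ) + b - k, by omega⟩ := by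
      intro t
      rw [Fin.ext_iff]
      simp only []
      omega
    simp_rw [ht0]
    rw [Finset.sum_ite_eq' Finset.univ]
    simp only [Finset.mem_univ, if_true]
    rw [dif_pos ⟨by omega, by omega⟩]
    show A _ _ = A _ _
    congr 1
    exact Fin.ext (by simp; omega)
  · have hz : ∀ t : Fin b, ¬((i : ℕ) + b = k + (t : ℕ)) := fun t => by omega
    simp only [hz, if_false, Finset.sum_const_zero]
    have h1 : (i : ℕ) < k := i.2
    show offUpper A k hkn i j = 0
    show A ⟨(i : ℕ), _⟩ ⟨k + (j : ℕ), _⟩ = 0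
    apply hband
    rw [abs_sub_comm]
    rw [abs_of_nonneg (by push_cast; omega)]
    push_cast
    omega

/-- For a symmetric `b`-banded `A ∈ ℝ^{n×n}` (`b ≥ 1`) and every
`1 ≤ k < n`, the off-diagonal blocks of `A (I + A²)⁻¹` have rank at most `2b`. -/
theorem offdiag_rank_banded_product {n b : ℕ} (hb : 1 ≤ b)
    (A : Matrix (Fin n) (Fin n) ℝ)
    (hsymm : Aᵀ = A)
    (hband : ∀ i j : Fin n, (b : ℤ) < |(i : ℤ) - (j : ℤ)| → A i j = 0)
    (k : ℕ) (hk1 : 1 ≤ k) (hkn : k < n) :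
    (offUpper (A * (1 + A ^ 2)⁻¹) k hkn).rank ≤ 2 * b ∧
    (offLower (A * (1 + A ^ 2)⁻¹) k hkn).rank ≤ 2 * b := by
  classical
  set S : Matrix (Fin n) (Fin n) ℝ := 1 + A ^ 2 with hSdef
  have hSunit : IsUnit S.det := mydet_one_add_sq A hsymm
  set M : Matrix (Fin n) (Fin n) ℝ := A * S⁻¹ with hMdef
  have hAS : A * S = S * A := by rw [hSdef]; noncomm_ring
  have hcomm : S⁻¹ * A = A * S⁻¹ := by
    calc S⁻¹ * A = S⁻¹ * A * (S * S⁻¹) := by rw [Matrix.mul_nonsing_inv _ hSunit, mul_one]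
      _ = S⁻¹ * (A * S) * S⁻¹ := by simp only [Matrix.mul_assoc]
      _ = S⁻¹ * (S * A) * S⁻¹ := by rw [hAS]
      _ = (S⁻¹ * S) * (A * S⁻¹) := by simp only [Matrix.mul_assoc]
      _ = A * S⁻¹ := by rw [Matrix.nonsing_inv_mul _ hSunit, one_mul]
  have hST : Sᵀ = S := by
    rw [hSdef, Matrix.transpose_add, Matrix.transpose_one, Matrix.transpose_pow, hsymm]
  have hMsymm : Mᵀ = M := by
    rw [hMdef, Matrix.transpose_mul, Matrix.transpose_nonsing_inv, hST, hsymm, hcomm]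
  set el : Fin k → Fin n := fun i => ⟨i.1, i.2.trans hkn⟩ with hel
  set er : Fin (n - k) → Fin n := fun j => ⟨k + j.1, by have := j.2; omega⟩ with her
  set e : Fin k ⊕ Fin (n - k) ≃ Fin n :=
    finSumFinEquiv.trans (finCongr (by omega)) with hedef
  have he1 : ∀ i : Fin k, e (Sum.inl i) = el i := fun i => Fin.ext (by simp [hedef, hel])
  have he2 : ∀ j : Fin (n - k), e (Sum.inr j) = er j := fun j => Fin.ext (by simp [hedef, her])
  set p : ((Fin k ⊕ Fin k) ⊕ (Fin (n - k) ⊕ Fin (n - k))) ≃ (Fin n ⊕ Fin n) :=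
    (Equiv.sumSumSumComm (Fin k) (Fin k) (Fin (n - k)) (Fin (n - k))).trans
      (Equiv.sumCongr e e) with hpdef
  have hp1 : ∀ i : Fin k, p (Sum.inl (Sum.inl i)) = Sum.inl (el i) := fun i => by
    simp [hpdef, he1]
  have hp2 : ∀ i : Fin k, p (Sum.inl (Sum.inr i)) = Sum.inr (el i) := fun i => by
    simp [hpdef, he1]
  have hp3 : ∀ j : Fin (n - k), p (Sum.inr (Sum.inl j)) = Sum.inl (er j) := fun j => by
    simp [hpdef, he2]
  have hp4 : ∀ j : Fin (n - k), p (Sum.inr (Sum.inr j)) = Sum.inr (er j) := fun j => by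
    simp [hpdef, he2]
  set Bm : Matrix (Fin n ⊕ Fin n) (Fin n ⊕ Fin n) ℝ := fromBlocks A (-1) 1 A with hBmdef
  set Nm : Matrix (Fin n ⊕ Fin n) (Fin n ⊕ Fin n) ℝ := fromBlocks M S⁻¹ (-S⁻¹) M with hNmdef
  have key : A * M + S⁻¹ = 1 := by
    have h1 : A * M + S⁻¹ = S * S⁻¹ := by
      rw [hMdef, hSdef]
      noncomm_ring
    rw [h1, Matrix.mul_nonsing_inv _ hSunit]
  have hBN : Bm * Nm = 1 := by
    rw [hBmdef, hNmdef, Matrix.fromBlocks_multiply]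
    rw [show A * M + (-1) * (-S⁻¹) = 1 from by rw [neg_one_mul, neg_neg]; exact key]
    rw [show A * S⁻¹ + (-1) * M = 0 from by rw [neg_one_mul, ← hMdef, add_neg_cancel]]
    rw [show (1 : Matrix (Fin n) (Fin n) ℝ) * M + A * (-S⁻¹) = 0 from by
      rw [Matrix.one_mul, Matrix.mul_neg, ← hMdef, add_neg_cancel]]
    rw [show (1 : Matrix (Fin n) (Fin n) ℝ) * S⁻¹ + A * M = 1 from by
      rw [Matrix.one_mul, add_comm]; exact key]
    exact Matrix.fromBlocks_one
  set W := Bm.submatrix p p with hWdef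
  set V := Nm.submatrix p p with hVdef
  have hWV : W * V = 1 := by
    rw [hWdef, hVdef, Matrix.submatrix_mul_equiv Bm Nm _ p _, hBN, Matrix.submatrix_one_equiv]
  have h12 : W.toBlocks₁₁ * V.toBlocks₁₂ + W.toBlocks₁₂ * V.toBlocks₂₂ = 0 := by
    ext i j
    have h := congrFun (congrFun hWV (Sum.inl i)) (Sum.inr j)
    rw [Matrix.mul_apply, Fintype.sum_sum_type] at h
    simpa [Matrix.toBlocks₁₁, Matrix.toBlocks₁₂, Matrix.toBlocks₂₂, Matrix.mul_apply,
      Matrix.one_apply] using h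
  have hA11 : (A.submatrix el el)ᵀ = A.submatrix el el := by
    rw [Matrix.transpose_submatrix, hsymm]
  have hW11 : W.toBlocks₁₁ = fromBlocks (A.submatrix el el) (-1) 1 (A.submatrix el el) := by
    ext i j
    rcases i with i | i <;> rcases j with j | j <;>
      simp [Matrix.toBlocks₁₁, hWdef, hp1, hp2, hBmdef, Matrix.one_apply, hel, Fin.ext_iff]
  have hdet11 : IsUnit (W.toBlocks₁₁).det := by
    rw [hW11]; exact mydet_fromBlocks_sym _ hA11
  obtain ⟨E, F, hEF⟩ := band_factor hkn A hband
  have hEF' : ∀ (i : Fin k) (j : Fin (n - k)), A (el i) (er j) = (E * F) i j := fun i j => by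
    have := congrFun (congrFun hEF i) j
    simpa [offUpper, hel, her] using this
  have hne : ∀ (i : Fin k) (j : Fin (n - k)), el i ≠ er j := fun i j h => by
    have := congrArg Fin.val h
    simp [hel, her] at this
    omega
  have hW12 : W.toBlocks₁₂ = fromBlocks (E * F) 0 0 (E * F) := by
    ext i j
    rcases i with i | i <;> rcases j with j | j <;>
      simp [Matrix.toBlocks₁₂, hWdef, hp1, hp2, hp3, hp4, hBmdef, hEF',
        Matrix.one_apply, hne i j]
  have hstep : V.toBlocks₁₂ = (W.toBlocks₁₁)⁻¹ * ((-W.toBlocks₁₂) * V.toBlocks₂₂) := by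
    have h := eq_neg_of_add_eq_zero_left h12
    calc V.toBlocks₁₂ = ((W.toBlocks₁₁)⁻¹ * W.toBlocks₁₁) * V.toBlocks₁₂ := by
          rw [Matrix.nonsing_inv_mul _ hdet11, Matrix.one_mul]
      _ = (W.toBlocks₁₁)⁻¹ * (W.toBlocks₁₁ * V.toBlocks₁₂) := by rw [Matrix.mul_assoc]
      _ = _ := by rw [h, ← Matrix.neg_mul]
  have hr12 : (V.toBlocks₁₂).rank ≤ 2 * b := by
    rw [hstep]
    refine le_trans (Matrix.rank_mul_le_right _ _) ?_
    have hfac : -W.toBlocks₁₂ = fromBlocks (-E) 0 0 (-E) * fromBlocks F 0 0 F := by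
      rw [hW12, Matrix.fromBlocks_multiply]
      simp [Matrix.fromBlocks_neg, Matrix.neg_mul]
    rw [hfac, Matrix.mul_assoc]
    refine le_trans (Matrix.rank_mul_le_left _ _) ?_
    refine le_trans (Matrix.rank_le_card_width _) ?_
    simp [Fintype.card_sum]
    omega
  have hup : offUpper M k hkn = (V.toBlocks₁₂).submatrix Sum.inl Sum.inl := by
    ext i j
    simp [offUpper, Matrix.toBlocks₁₂, hVdef, hp1, hp3, hNmdef, hel, her]
  have hupr : (offUpper M k hkn).rank ≤ 2 * b := by
    rw [hup]
    exact le_trans (myrank_submatrix_le _ _ _) hr12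
  refine ⟨hupr, ?_⟩
  have hlow : offLower M k hkn = (offUpper M k hkn)ᵀ := by
    ext i j
    show M _ _ = M _ _
    conv_lhs => rw [← hMsymm]
    rfl
  rw [hlow, Matrix.rank_transpose]
  exact hupr
end

section
/- Let X ∈ ℝ^{n×n} be symmetric and tridiagonal, and let α, β ∈ ℝ and c > 0. Then for every 1 ≤ k < n, the off-diagonal blocks of the matrix α·X + β·X·(I + c·X²)⁻¹ have rank at most 3. In particular, the first iterate X₁ = (b₀/c₀)·X₀ + (a₀ − b₀/c₀)·X₀·(I + c₀·X₀²)⁻¹ of the QDWH algorithm applied to a symmetric tridiagonal matrix X₀ has all off-diagonal blocks of rank at most 3. -/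
/-!
Write `ρ(M)` for the rank of the upper off-diagonal block `M(1:k, k+1:n)`. Block multiplication
shows `ρ(P Q) ≤ ρ(P) + ρ(Q)`; moreover `ρ` is subadditive, does not grow under scaling and
vanishes on the identity. If `A` and its leading `k × k` block `A₁₁` are invertible, the
`(1,2)` block of `A A⁻¹ = I` reads `A₁₁ (A⁻¹)₁₂ = -A₁₂ (A⁻¹)₂₂`, so `ρ(A⁻¹) ≤ ρ(A)`. For
`A = I + c X²` both blocks are invertible because `A` is positive definite. A tridiagonal `X`
has `ρ(X) ≤ 1`, hence
`ρ(α X + β X A⁻¹) = ρ(X (α I + β A⁻¹)) ≤ ρ(X) + ρ(A) ≤ ρ(X) + ρ(X X) ≤ 3`.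
The lower block of a matrix is the transpose of the upper block of its transpose, and the
transpose of `X (α I + β A⁻¹)` is `(α I + β A⁻¹) X`, to which the same bound applies.
-/

open Matrix

variable {n : ℕ}

def ulBlock {α : Type*} (M : Matrix (Fin n) (Fin n) α) (k : ℕ) (hk : k < n) :
    Matrix (Fin k) (Fin k) α :=
  M.submatrix (Fin.castLE hk.le) (Fin.castLE hk.le)

def lrBlock {α : Type*} (M : Matrix (Fin n) (Fin n) α) (k : ℕ) (hk : k < n) :
    Matrix (Fin (n - k)) (Fin (n - k)) α :=
  M.submatrix (fun i => ⟨k + i.1, by omega⟩) (fun j => ⟨k + j.1, by omega⟩)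

theorem Fin.sum_univ_split_at {M : Type*} [AddCommMonoid M] {k : ℕ} (hk : k < n)
    (f : Fin n → M) :
    ∑ l, f l =
      ∑ i : Fin k, f ⟨i.1, i.2.trans hk⟩ + ∑ j : Fin (n - k), f ⟨k + j.1, by omega⟩ := by
  rw [← Equiv.sum_comp ((finSumFinEquiv (m := k) (n := n - k)).trans (finCongr (by omega))) f,
    Fintype.sum_sum_type]
  rfl

namespace Matrix

variable {K : Type*} [Field K] {m p : Type*} [Fintype p]

theorem rank_add_le_s15 (A B : Matrix m p K) : (A + B).rank ≤ A.rank + B.rank := by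
  rw [rank, rank, rank, mulVecLin_add]
  exact (Submodule.finrank_mono (LinearMap.range_add_le _ _)).trans
    (Submodule.finrank_add_le_finrank_add_finrank _ _)

variable [Fintype m] [DecidableEq m]

theorem rank_smul_le (r : K) (A : Matrix m p K) : (r • A).rank ≤ A.rank := by
  rw [smul_eq_diagonal_mul]
  exact rank_mul_le_right _ _

theorem rank_neg (A : Matrix m p K) : (-A).rank = A.rank :=
  le_antisymm (by simpa using rank_smul_le (-1) A) (by simpa using rank_smul_le (-1) (-A))

end Matrix

section OffDiagonalBlocks

variable {α : Type*} (k : ℕ) (hk : k < n)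

theorem offLower_eq_transpose_offUpper_transpose (M : Matrix (Fin n) (Fin n) α) :
    offLower M k hk = (offUpper Mᵀ k hk)ᵀ :=
  rfl

theorem offUpper_add [Add α] (P Q : Matrix (Fin n) (Fin n) α) :
    offUpper (P + Q) k hk = offUpper P k hk + offUpper Q k hk :=
  rfl

theorem offUpper_smul {R : Type*} [SMul R α] (r : R) (P : Matrix (Fin n) (Fin n) α) :
    offUpper (r • P) k hk = r • offUpper P k hk :=
  rfl

theorem offUpper_one [Zero α] [One α] : offUpper (1 : Matrix (Fin n) (Fin n) α) k hk = 0 := by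
  ext i j
  exact one_apply_ne (by simp [Fin.ext_iff]; omega)

theorem offUpper_mul [NonUnitalNonAssocSemiring α] (P Q : Matrix (Fin n) (Fin n) α) :
    offUpper (P * Q) k hk =
      ulBlock P k hk * offUpper Q k hk + offUpper P k hk * lrBlock Q k hk := by
  ext i j
  exact Fin.sum_univ_split_at hk _

variable {K : Type*} [Field K]

theorem rank_offUpper_mul_le (P Q : Matrix (Fin n) (Fin n) K) :
    (offUpper (P * Q) k hk).rank ≤ (offUpper P k hk).rank + (offUpper Q k hk).rank := by
  rw [offUpper_mul, add_comm (offUpper P k hk).rank]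
  exact (rank_add_le_s15 _ _).trans (add_le_add (rank_mul_le_right _ _) (rank_mul_le_left _ _))

theorem rank_offUpper_nonsing_inv_le {A : Matrix (Fin n) (Fin n) K} (hA : IsUnit A.det)
    (hul : IsUnit (ulBlock A k hk).det) : (offUpper A⁻¹ k hk).rank ≤ (offUpper A k hk).rank := by
  have hblock : ulBlock A k hk * offUpper A⁻¹ k hk = -offUpper A k hk * lrBlock A⁻¹ k hk := by
    rw [Matrix.neg_mul, eq_neg_iff_add_eq_zero, ← offUpper_mul, mul_nonsing_inv A hA,
      offUpper_one]
  have hsolve :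
      offUpper A⁻¹ k hk = (ulBlock A k hk)⁻¹ * (-offUpper A k hk * lrBlock A⁻¹ k hk) := by
    rw [← hblock, ← Matrix.mul_assoc, nonsing_inv_mul _ hul, Matrix.one_mul]
  rw [hsolve, ← rank_neg (offUpper A k hk)]
  exact (rank_mul_le_right _ _).trans (rank_mul_le_left _ _)

theorem rank_offUpper_le_of_upper_band {W : Matrix (Fin n) (Fin n) K} {b : ℕ}
    (hW : ∀ i j : Fin n, (i : ℕ) + b < j → W i j = 0) : (offUpper W k hk).rank ≤ b := by
  classical
  -- only the last `b` rows of the block can be nonzero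
  let d : Fin k → K := fun i => if k ≤ i + b then 1 else 0
  have hproj : diagonal d * offUpper W k hk = offUpper W k hk := by
    ext i j
    rw [diagonal_mul]
    by_cases h : k ≤ i + b
    · simp [d, h]
    · simp only [d, if_neg h, zero_mul]
      exact (hW _ _ (show i.1 + b < k + j.1 by omega)).symm
  have hrows : Fintype.card {i // d i ≠ 0} ≤ b := by
    refine (Fintype.card_le_of_injective (fun i => (⟨k - 1 - i.1.1, ?_⟩ : Fin b)) ?_).trans_eq
      (Fintype.card_fin b)
    · have := i.2
      simp only [d, ne_eq, ite_eq_right_iff, one_ne_zero, imp_false, not_not] at this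
      omega
    · intro i i' h
      simp only [Fin.mk.injEq] at h
      exact Subtype.ext (Fin.ext (by omega))
  calc (offUpper W k hk).rank = (diagonal d * offUpper W k hk).rank := by rw [hproj]
    _ ≤ (diagonal d).rank := rank_mul_le_left _ _
    _ = Fintype.card {i // d i ≠ 0} := rank_diagonal d
    _ ≤ b := hrows

end OffDiagonalBlocks

open scoped ComplexOrder in
theorem Matrix.IsHermitian.posDef_one_add_smul_sq {𝕜 : Type*} [RCLike 𝕜] {m : Type*}
    [Fintype m] [DecidableEq m] {X : Matrix m m 𝕜} (hX : X.IsHermitian) {c : ℝ} (hc : 0 ≤ c) :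
    (1 + c • X ^ 2).PosDef := by
  rw [sq]
  nth_rewrite 1 [← hX.eq]
  exact PosDef.one.add_posSemidef ((posSemidef_conjTranspose_mul_self X).smul hc)

theorem offdiag_rank_first_qdwh_iterate_general {n : ℕ} (X : Matrix (Fin n) (Fin n) ℝ)
    (hsymm : Xᵀ = X)
    (htri : ∀ i j : Fin n, (1 : ℤ) < |(i : ℤ) - (j : ℤ)| → X i j = 0)
    (α β c : ℝ) (hc : 0 < c)
    (k : ℕ) (hkn : k < n) :
    (offUpper (α • X + β • (X * (1 + c • X ^ 2)⁻¹)) k hkn).rank ≤ 3 ∧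
    (offLower (α • X + β • (X * (1 + c • X ^ 2)⁻¹)) k hkn).rank ≤ 3 := by
  set A := 1 + c • X ^ 2 with hA_def
  set C := α • (1 : Matrix (Fin n) (Fin n) ℝ) + β • A⁻¹
  have hM : α • X + β • (X * A⁻¹) = X * C := by
    rw [mul_add, Matrix.mul_smul, Matrix.mul_smul, Matrix.mul_one]
  have hX : (offUpper X k hkn).rank ≤ 1 :=
    rank_offUpper_le_of_upper_band k hkn fun i j hij => htri i j (lt_abs.2 (Or.inr (by omega)))
  have hA : (offUpper A k hkn).rank ≤ 2 := by
    rw [hA_def, offUpper_add, offUpper_smul, offUpper_one, zero_add, sq]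
    exact (rank_smul_le _ _).trans ((rank_offUpper_mul_le k hkn X X).trans (by omega))
  have hXh : X.IsHermitian := by rwa [IsHermitian, conjTranspose_eq_transpose_of_trivial]
  have hApd : A.PosDef := hXh.posDef_one_add_smul_sq hc.le
  have hC : (offUpper C k hkn).rank ≤ 2 := by
    rw [offUpper_add, offUpper_smul, offUpper_one, smul_zero, zero_add]
    refine (rank_smul_le _ _).trans ((rank_offUpper_nonsing_inv_le k hkn ?_ ?_).trans hA)
    · exact (isUnit_iff_isUnit_det _).1 hApd.isUnit
    · exact (isUnit_iff_isUnit_det _).1 (hApd.submatrix (Fin.castLE_injective _)).isUnit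
  have hCT : Cᵀ = C := by
    simp [C, transpose_nonsing_inv, hA_def, transpose_pow, hsymm]
  constructor
  · rw [hM]
    exact (rank_offUpper_mul_le k hkn X C).trans (by omega)
  · rw [hM, offLower_eq_transpose_offUpper_transpose, rank_transpose, transpose_mul, hCT, hsymm]
    exact (rank_offUpper_mul_le k hkn C X).trans (by omega)

/-- For a symmetric tridiagonal `X ∈ ℝ^{n×n}`, scalars `α, β ∈ ℝ`, `c > 0`,
and every `1 ≤ k < n`, the off-diagonal blocks of `α X + β X (I + c X²)⁻¹` have rank at
most `3`. In particular, the first QDWH iterate of a symmetric tridiagonal matrix has all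
off-diagonal blocks of rank at most `3`. -/
theorem offdiag_rank_first_qdwh_iterate {n : ℕ} (X : Matrix (Fin n) (Fin n) ℝ)
    (hsymm : Xᵀ = X)
    (htri : ∀ i j : Fin n, (1 : ℤ) < |(i : ℤ) - (j : ℤ)| → X i j = 0)
    (α β c : ℝ) (hc : 0 < c)
    (k : ℕ) (hk1 : 1 ≤ k) (hkn : k < n) :
    (offUpper (α • X + β • (X * (1 + c • X ^ 2)⁻¹)) k hkn).rank ≤ 3 ∧
    (offLower (α • X + β • (X * (1 + c • X ^ 2)⁻¹)) k hkn).rank ≤ 3 :=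
  offdiag_rank_first_qdwh_iterate_general X hsymm htri α β c hc k hkn
end
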